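/- arXiv:0911.5075 — 6 statements merged into one kernel-verified Lean document; each statement's English description precedes it below -/
import Mathlib

section
/- For every N ≥ 2, the triangle-move graph 𝒢_N is connected: any two labeled connected graphs on N vertices can be transformed into one another by a finite sequence of triangle moves (adding an edge whose endpoints have a common neighbor, or deleting an edge lying in a triangle), with every intermediate graph connected. -/
open scoped Classical

/-- A labeled connected graph on `N` vertices: a connected simple graph on `Fin N`. -/
abbrev ConnGraph (N : ℕ) := {G : SimpleGraph (Fin N) // G.Connected}

noncomputable instance (N : ℕ) : Fintype (ConnGraph N) := Fintype.ofFinite _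

/-- `H` is obtained from `G` by adding a single edge `{i,j} ∉ E(G)` whose endpoints
have a common neighbor in `G` (i.e. the added edge lies in a triangle of `H`). -/
def TriMove {N : ℕ} (G H : SimpleGraph (Fin N)) : Prop :=
  ∃ i j : Fin N, i ≠ j ∧ ¬ G.Adj i j ∧ (∃ k, G.Adj i k ∧ G.Adj j k) ∧
    H = G ⊔ SimpleGraph.fromEdgeSet {s(i, j)}

/-- The triangle-move graph `𝒢_N`: vertices are the labeled connected graphs on `N`
vertices, two distinct graphs being adjacent iff one is obtained from the other by a
triangle move. -/
def GraphityGraph (N : ℕ) : SimpleGraph (ConnGraph N) where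
  Adj G H := G ≠ H ∧ (TriMove G.1 H.1 ∨ TriMove H.1 G.1)
  symm := ⟨fun _G _H h => ⟨h.1.symm, h.2.symm⟩⟩
  loopless := ⟨fun _G h => h.1 rfl⟩

/-- The number of edges of a simple graph on `Fin N`. -/
noncomputable def edgeCount {N : ℕ} (G : SimpleGraph (Fin N)) : ℕ := G.edgeSet.ncard

/-- The degree-proportional distribution on `𝒢_N`: each vertex `G` gets probability
`deg(G)` divided by the sum of all degrees. -/
noncomputable def piN (N : ℕ) : ConnGraph N → ℝ := fun G =>
  (((GraphityGraph N).neighborSet G).ncard : ℝ) /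
    ∑ H : ConnGraph N, (((GraphityGraph N).neighborSet H).ncard : ℝ)


lemma exists_trimove_pair {N : ℕ} (G : SimpleGraph (Fin N)) (hc : G.Connected)
    (hne : G ≠ ⊤) : ∃ i j k : Fin N, i ≠ j ∧ ¬ G.Adj i j ∧ G.Adj i k ∧ G.Adj j k := by
  have h1 : ∃ a b : Fin N, a ≠ b ∧ ¬ G.Adj a b := by
    by_contra h
    push_neg at h
    apply hne
    ext a b
    simp only [SimpleGraph.top_adj]
    exact ⟨fun h' => h'.ne, fun hab => h a b hab⟩
  obtain ⟨a, b, hab, hnadj⟩ := h1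
  suffices H : ∀ d (a b : Fin N), a ≠ b → ¬ G.Adj a b → G.dist a b = d →
      ∃ i j k : Fin N, i ≠ j ∧ ¬ G.Adj i j ∧ G.Adj i k ∧ G.Adj j k from
    H _ a b hab hnadj rfl
  intro d
  induction d using Nat.strong_induction_on with
  | _ d IH =>
    intro a b hab hnadj hd
    have hreach : G.Reachable a b := hc.preconnected a b
    have hpos : 0 < G.dist a b := hreach.pos_dist_of_ne hab
    have hne1 : G.dist a b ≠ 1 := fun h => hnadj (SimpleGraph.dist_eq_one_iff_adj.mp h)
    have hd2 : 2 ≤ d := by omega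
    obtain ⟨w, hw⟩ := hreach.exists_walk_length_eq_dist
    rw [hd] at hw
    have hadj1 : G.Adj a (w.getVert 1) := by
      have := w.adj_getVert_succ (i := 0) (by omega)
      simpa using this
    have hadj2 : G.Adj (w.getVert 1) (w.getVert 2) := by
      have := w.adj_getVert_succ (i := 1) (by omega)
      simpa using this
    rcases eq_or_lt_of_le hd2 with h2 | h3
    · -- d = 2 : getVert 2 = b
      have hb : w.getVert 2 = b := by
        rw [show (2 : ℕ) = w.length by omega]
        exact w.getVert_length
      exact ⟨a, b, w.getVert 1, hab, hnadj, hadj1, (hb ▸ hadj2).symm⟩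
    · -- d ≥ 3 : recurse on pair (getVert 1, b)
      set u := w.getVert 1 with hu
      have hub : u ≠ b := by
        intro h
        exact hnadj (h ▸ hadj1)
      have hnadju : ¬ G.Adj u b := by
        intro h
        have : G.dist a b ≤ 2 := by
          have := SimpleGraph.dist_le (SimpleGraph.Walk.cons hadj1 h.toWalk)
          simpa using this
        omega
      have hdu : G.dist u b < d := by
        -- walk from u to b of length d - 1
        cases w with
        | nil => simp at hw; omega
        | @cons _ c _ h p =>
          have h1 : G.dist c b ≤ p.length := SimpleGraph.dist_le p
          have hp : p.length = d - 1 := by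
            simp [SimpleGraph.Walk.length_cons] at hw; omega
          have hu' : u = c := by
            simp [hu, SimpleGraph.Walk.getVert]
          rw [hu']
          omega
      exact IH _ hdu u b hub hnadju rfl

lemma reach_top {N : ℕ} (G T : ConnGraph N) (hT : T.1 = ⊤) :
    (GraphityGraph N).Reachable G T := by
  generalize hn : ((⊤ : SimpleGraph (Fin N)).edgeSet \ G.1.edgeSet).ncard = n
  induction n using Nat.strong_induction_on generalizing G with
  | _ n IH =>
    by_cases htop : G.1 = ⊤
    · have : G = T := Subtype.ext (by rw [htop, hT])
      rw [this]
    · obtain ⟨i, j, k, hij, hnadj, hik, hjk⟩ := exists_trimove_pair G.1 G.2 htop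
      set H : SimpleGraph (Fin N) := G.1 ⊔ SimpleGraph.fromEdgeSet {s(i, j)} with hH
      have hGH : G.1 ≤ H := le_sup_left
      have hHconn : H.Connected := G.2.mono hGH
      have hHadj : H.Adj i j := by
        simp [hH, SimpleGraph.fromEdgeSet_adj, hij]
      have hneq : G ≠ (⟨H, hHconn⟩ : ConnGraph N) := by
        intro h
        apply hnadj
        rw [show G.1 = H from congrArg Subtype.val h]
        exact hHadj
      have hadjGH : (GraphityGraph N).Adj G ⟨H, hHconn⟩ :=
        ⟨hneq, Or.inl ⟨i, j, hij, hnadj, ⟨k, hik, hjk⟩, rfl⟩⟩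
      have hEH : H.edgeSet = G.1.edgeSet ∪ {s(i, j)} := by
        rw [hH, SimpleGraph.edgeSet_sup, SimpleGraph.edgeSet_fromEdgeSet]
        congr 1
        ext e
        simp only [Set.mem_diff, Set.mem_singleton_iff, Set.mem_setOf_eq]
        constructor
        · rintro ⟨h, _⟩; exact h
        · rintro rfl; exact ⟨rfl, by simp [hij]⟩
      have hmem : s(i, j) ∈ (⊤ : SimpleGraph (Fin N)).edgeSet \ G.1.edgeSet := by
        constructor
        · simp [SimpleGraph.mem_edgeSet, hij]
        · simpa [SimpleGraph.mem_edgeSet] using hnadj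
      have hsub : (⊤ : SimpleGraph (Fin N)).edgeSet \ H.edgeSet ⊂
          (⊤ : SimpleGraph (Fin N)).edgeSet \ G.1.edgeSet := by
        constructor
        · intro e he
          rw [hEH] at he
          exact ⟨he.1, fun h => he.2 (Or.inl h)⟩
        · intro hsub'
          have := hsub' hmem
          rw [hEH] at this
          exact this.2 (Or.inr rfl)
      have hlt : ((⊤ : SimpleGraph (Fin N)).edgeSet \ H.edgeSet).ncard < n := by
        rw [← hn]
        exact Set.ncard_lt_ncard hsub (Set.toFinite _)
      exact hadjGH.reachable.trans (IH _ hlt ⟨H, hHconn⟩ rfl)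

lemma top_conn {N : ℕ} (hN : 2 ≤ N) : (⊤ : SimpleGraph (Fin N)).Connected :=
  @SimpleGraph.connected_top (Fin N) ⟨⟨0, by omega⟩⟩

/-- For every `N ≥ 2`, the triangle-move graph `𝒢_N` is connected: any two labeled
connected graphs on `N` vertices are joined by a finite sequence of triangle moves,
all intermediate graphs being connected. -/
theorem graphityGraph_connected (N : ℕ) (hN : 2 ≤ N) :
    (GraphityGraph N).Connected := by
  have T : ConnGraph N := ⟨⊤, top_conn hN⟩
  haveI : Nonempty (ConnGraph N) := ⟨⟨⊤, top_conn hN⟩⟩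
  exact ⟨fun G H => ((reach_top G ⟨⊤, top_conn hN⟩ rfl).trans
    (reach_top H ⟨⊤, top_conn hN⟩ rfl).symm)⟩
end

section
/- For every N ≥ 2, every vertex G of the triangle-move graph 𝒢_N has degree at least N − 2 and at most N(N−1)/2; that is, for every connected simple graph G on Fin N, the number of edges of G lying in a triangle of G plus the number of non-edges of G whose endpoints have a common neighbor in G is at least N − 2 and at most N(N−1)/2. -/
open scoped Classical

open SimpleGraph

lemma reach_of_adj_imp {V : Type*} {G H : SimpleGraph V}
    (h : ∀ a b, G.Adj a b → H.Reachable a b) {u v : V} (huv : G.Reachable u v) :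
    H.Reachable u v := by
  obtain ⟨w⟩ := huv
  induction w with
  | nil => exact Reachable.refl _
  | cons ha _ ih => exact (h _ _ ha).trans ih

lemma connected_deleteEdge {V : Type*} {G : SimpleGraph V} (hc : G.Connected)
    {i j k : V} (hik : G.Adj i k) (hjk : G.Adj j k) :
    (G.deleteEdges {s(i, j)}).Connected := by
  rw [connected_iff] at hc ⊢
  refine ⟨fun u v => ?_, hc.2⟩
  refine reach_of_adj_imp (fun a b hab => ?_) (hc.1 u v)
  by_cases he : s(a, b) = s(i, j)
  · have hki : k ≠ i := hik.ne'
    have hkj : k ≠ j := hjk.ne'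
    have h1 : (G.deleteEdges {s(i, j)}).Adj i k := by
      rw [deleteEdges_adj]
      refine ⟨hik, ?_⟩
      simp only [Set.mem_singleton_iff, Sym2.eq_iff]
      rintro (⟨-, rfl⟩ | ⟨rfl, -⟩) <;> simp_all
    have h2 : (G.deleteEdges {s(i, j)}).Adj j k := by
      rw [deleteEdges_adj]
      refine ⟨hjk, ?_⟩
      simp only [Set.mem_singleton_iff, Sym2.eq_iff]
      rintro (⟨-, rfl⟩ | ⟨-, rfl⟩) <;> simp_all
    have hij : (G.deleteEdges {s(i, j)}).Reachable i j :=
      h1.reachable.trans h2.reachable.symm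
    rw [Sym2.eq_iff] at he
    rcases he with ⟨rfl, rfl⟩ | ⟨rfl, rfl⟩
    · exact hij
    · exact hij.symm
  · exact Adj.reachable (by rw [deleteEdges_adj]; exact ⟨hab, by simpa using he⟩)

lemma exists_parent {V : Type*} {G : SimpleGraph V} (hc : G.Connected)
    (r u : V) (h : G.dist r u ≠ 0) :
    ∃ w, G.Adj u w ∧ G.dist r w + 1 = G.dist r u := by
  obtain ⟨q, hq⟩ := (hc u r).exists_walk_length_eq_dist
  have hlen : q.length = G.dist r u := by rw [hq, SimpleGraph.dist_comm]
  have hnil : ¬ q.Nil := by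
    rw [SimpleGraph.Walk.nil_iff_length_eq]
    omega
  refine ⟨q.getVert 1, q.adj_snd hnil, ?_⟩
  have h1 : G.dist (q.getVert 1) r ≤ q.tail.length := SimpleGraph.dist_le q.tail
  have h2 : q.tail.length + 1 = q.length := SimpleGraph.Walk.length_tail_add_one hnil
  have h3 : G.dist r u ≤ G.dist r (q.getVert 1) + G.dist (q.getVert 1) u :=
    hc.dist_triangle
  have h4 : G.dist (q.getVert 1) u ≤ 1 := by
    have := SimpleGraph.dist_le (SimpleGraph.Walk.cons (q.adj_snd hnil).symm SimpleGraph.Walk.nil)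
    simpa using this
  have h5 : G.dist r (q.getVert 1) = G.dist (q.getVert 1) r := SimpleGraph.dist_comm ..
  omega


section
variable {N : ℕ}

def setA (G : SimpleGraph (Fin N)) : Set (Sym2 (Fin N)) :=
  {e | ∃ i j : Fin N, e = s(i, j) ∧ G.Adj i j ∧ ∃ k, G.Adj i k ∧ G.Adj j k}

def setB (G : SimpleGraph (Fin N)) : Set (Sym2 (Fin N)) :=
  {e | ∃ i j : Fin N, e = s(i, j) ∧ i ≠ j ∧ ¬ G.Adj i j ∧ ∃ k, G.Adj i k ∧ G.Adj j k}

noncomputable def moveG (G : SimpleGraph (Fin N)) (e : Sym2 (Fin N)) : SimpleGraph (Fin N) :=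
  if e ∈ G.edgeSet then G.deleteEdges {e} else G ⊔ SimpleGraph.fromEdgeSet {e}

lemma notDiag_of_mem {G : SimpleGraph (Fin N)} {e : Sym2 (Fin N)}
    (he : e ∈ setA G ∪ setB G) : ¬ e.IsDiag := by
  rcases he with ⟨i, j, rfl, hadj, -⟩ | ⟨i, j, rfl, hne, -⟩ <;>
    simp [Sym2.mk_isDiag_iff] <;> first | exact hadj.ne | exact hne

lemma disj_setAB (G : SimpleGraph (Fin N)) : Disjoint (setA G) (setB G) := by
  rw [Set.disjoint_left]
  rintro e ⟨i, j, rfl, hadj, -⟩ ⟨i', j', he, -, hnadj, -⟩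
  rw [Sym2.eq_iff] at he
  rcases he with ⟨rfl, rfl⟩ | ⟨rfl, rfl⟩
  · exact hnadj hadj
  · exact hnadj hadj.symm

lemma mem_move_other (G : SimpleGraph (Fin N)) {e e' : Sym2 (Fin N)} (hne : e ≠ e') :
    e ∈ (moveG G e').edgeSet ↔ e ∈ G.edgeSet := by
  by_cases h : e' ∈ G.edgeSet <;>
    simp [moveG, h, edgeSet_deleteEdges, edgeSet_sup, edgeSet_fromEdgeSet, hne]

lemma mem_move_self {G : SimpleGraph (Fin N)} {e : Sym2 (Fin N)} (hd : ¬ e.IsDiag) :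
    e ∈ (moveG G e).edgeSet ↔ e ∉ G.edgeSet := by
  by_cases h : e ∈ G.edgeSet <;>
    simp [moveG, h, edgeSet_deleteEdges, edgeSet_sup, edgeSet_fromEdgeSet, hd]

lemma move_injOn (G : SimpleGraph (Fin N)) : Set.InjOn (moveG G) (setA G ∪ setB G) := by
  intro e he e' he' heq
  by_contra hne
  have h1 := (mem_move_self (G := G) (notDiag_of_mem he))
  rw [heq, mem_move_other G hne] at h1
  tauto

lemma sup_delete_eq {V : Type*} {G : SimpleGraph V} {i j : V} (hadj : G.Adj i j) :
    G = (G.deleteEdges {s(i, j)}) ⊔ SimpleGraph.fromEdgeSet {s(i, j)} := by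
  ext a b
  simp only [sup_adj, deleteEdges_adj, fromEdgeSet_adj, Set.mem_singleton_iff]
  constructor
  · intro h
    by_cases hab : s(a, b) = s(i, j)
    · exact Or.inr ⟨hab, h.ne⟩
    · exact Or.inl ⟨h, hab⟩
  · rintro (⟨h, -⟩ | ⟨hab, -⟩)
    · exact h
    · rw [Sym2.eq_iff] at hab
      rcases hab with ⟨rfl, rfl⟩ | ⟨rfl, rfl⟩
      · exact hadj
      · exact hadj.symm

lemma image_neighborSet (N : ℕ) (G : ConnGraph N) :
    Subtype.val '' ((GraphityGraph N).neighborSet G) = moveG G.1 '' (setA G.1 ∪ setB G.1) := by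
  ext H
  constructor
  · rintro ⟨H', hH', rfl⟩
    obtain ⟨hne, hmov | hmov⟩ : G ≠ H' ∧ (TriMove G.1 H'.1 ∨ TriMove H'.1 G.1) := hH'
    · obtain ⟨i, j, hij, hnadj, ⟨k, hik, hjk⟩, hEq⟩ := hmov
      refine ⟨s(i, j), Or.inr ⟨i, j, rfl, hij, hnadj, k, hik, hjk⟩, ?_⟩
      rw [moveG, if_neg (by rwa [mem_edgeSet]), hEq]
    · obtain ⟨i, j, hij, hnadj, ⟨k, hik, hjk⟩, hEq⟩ := hmov
      have hGadj : G.1.Adj i j := by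
        rw [hEq]; exact Or.inr (by simp [fromEdgeSet_adj, hij])
      refine ⟨s(i, j), Or.inl ⟨i, j, rfl, hGadj, k, ?_, ?_⟩, ?_⟩
      · rw [hEq]; exact Or.inl hik
      · rw [hEq]; exact Or.inl hjk
      · rw [moveG, if_pos (by rwa [mem_edgeSet])]
        have : G.1.deleteEdges {s(i, j)} = H'.1 := by
          rw [hEq]
          ext a b
          simp only [deleteEdges_adj, sup_adj, fromEdgeSet_adj, Set.mem_singleton_iff]
          constructor
          · rintro ⟨h | ⟨he, -⟩, hn⟩
            · exact h
            · exact absurd he hn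
          · intro h
            refine ⟨Or.inl h, fun he => ?_⟩
            rw [Sym2.eq_iff] at he
            rcases he with ⟨rfl, rfl⟩ | ⟨rfl, rfl⟩
            · exact hnadj h
            · exact hnadj h.symm
        rw [this]
  · rintro ⟨e, he, rfl⟩
    rcases he with ⟨i, j, rfl, hadj, k, hik, hjk⟩ | ⟨i, j, rfl, hij, hnadj, k, hik, hjk⟩
    · -- deletion move
      have hik' : k ≠ j := hjk.ne'
      have hjk' : k ≠ i := hik.ne'
      set H : SimpleGraph (Fin N) := G.1.deleteEdges {s(i, j)} with hH
      have hconn : H.Connected := connected_deleteEdge G.2 hik hjk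
      have hHik : H.Adj i k := by
        rw [hH, deleteEdges_adj]
        exact ⟨hik, by simp only [Set.mem_singleton_iff, Sym2.eq_iff]; push_neg; exact ⟨fun _ => hik', fun _ => hjk'⟩⟩
      have hHjk : H.Adj j k := by
        rw [hH, deleteEdges_adj]
        exact ⟨hjk, by simp only [Set.mem_singleton_iff, Sym2.eq_iff]; push_neg; exact ⟨fun _ => hik', fun _ => hjk'⟩⟩
      have hHnadj : ¬ H.Adj i j := by simp [hH, deleteEdges_adj]
      refine ⟨⟨H, hconn⟩, (⟨?_, Or.inr ⟨i, j, hadj.ne, hHnadj, ⟨k, hHik, hHjk⟩, sup_delete_eq hadj⟩⟩ : G ≠ ⟨H, hconn⟩ ∧ (TriMove G.1 H ∨ TriMove H G.1)), ?_⟩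
      · intro hEq
        have hEq' : G.1 = H := congrArg Subtype.val hEq
        exact hHnadj (hEq' ▸ hadj)
      · show H = moveG G.1 s(i, j)
        rw [moveG, if_pos (by rwa [mem_edgeSet])]
    · -- addition move
      set H : SimpleGraph (Fin N) := G.1 ⊔ SimpleGraph.fromEdgeSet {s(i, j)} with hH
      have hconn : H.Connected := G.2.mono le_sup_left
      have hHadj : H.Adj i j := Or.inr (by simp [fromEdgeSet_adj, hij])
      refine ⟨⟨H, hconn⟩, (⟨?_, Or.inl ⟨i, j, hij, hnadj, ⟨k, hik, hjk⟩, rfl⟩⟩ : G ≠ ⟨H, hconn⟩ ∧ (TriMove G.1 H ∨ TriMove H G.1)), ?_⟩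
      · intro hEq
        have hEq' : G.1 = H := congrArg Subtype.val hEq
        exact hnadj (hEq'.symm ▸ hHadj)
      · show H = moveG G.1 s(i, j)
        rw [moveG, if_neg (by rwa [mem_edgeSet])]

end


lemma deg_eq (N : ℕ) (G : ConnGraph N) :
    ((GraphityGraph N).neighborSet G).ncard = (setA G.1).ncard + (setB G.1).ncard := by
  have h1 : ((GraphityGraph N).neighborSet G).ncard
      = (Subtype.val '' ((GraphityGraph N).neighborSet G)).ncard :=
    (Set.ncard_image_of_injective _ Subtype.val_injective).symm
  rw [h1, image_neighborSet, Set.ncard_image_of_injOn (move_injOn _),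
    Set.ncard_union_eq (disj_setAB _) (Set.toFinite _) (Set.toFinite _)]

lemma union_ub (N : ℕ) (G : SimpleGraph (Fin N)) :
    (setA G).ncard + (setB G).ncard ≤ N * (N - 1) / 2 := by
  rw [← Set.ncard_union_eq (disj_setAB _) (Set.toFinite _) (Set.toFinite _)]
  have hsub : setA G ∪ setB G ⊆ {e : Sym2 (Fin N) | ¬ e.IsDiag} := fun e he => notDiag_of_mem he
  have h2 : ({e : Sym2 (Fin N) | ¬ e.IsDiag}).ncard = N.choose 2 := by
    rw [← Nat.card_coe_set_eq, Nat.card_eq_fintype_card]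
    have h3 := Sym2.card_subtype_not_diag (α := Fin N)
    rw [Fintype.card_fin] at h3
    convert h3 using 2
    rfl
  calc (setA G ∪ setB G).ncard ≤ _ := Set.ncard_le_ncard hsub (Set.toFinite _)
  _ = N.choose 2 := h2
  _ = N * (N - 1) / 2 := Nat.choose_two_right N

lemma union_lb {N : ℕ} (hN : 2 ≤ N) (G : ConnGraph N) :
    N - 2 ≤ (setA G.1).ncard + (setB G.1).ncard := by
  rw [← Set.ncard_union_eq (disj_setAB _) (Set.toFinite _) (Set.toFinite _)]
  have hc := G.2
  set Gg := G.1 with hGg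
  have hr0 : (0 : ℕ) < N := by omega
  set r : Fin N := ⟨0, hr0⟩ with hrdef
  -- find a neighbor `c` of `r`
  obtain ⟨v, hv⟩ := Fintype.exists_ne_of_one_lt_card (by simp; omega) r
  obtain ⟨q⟩ := hc.preconnected r v
  have hnil : ¬ q.Nil := SimpleGraph.Walk.not_nil_of_ne (Ne.symm hv)
  set c : Fin N := q.getVert 1 with hcdef
  have hradj : Gg.Adj r c := q.adj_snd hnil
  have hdc : Gg.dist r c = 1 := SimpleGraph.dist_eq_one_iff_adj.mpr hradj
  have hrc : r ≠ c := hradj.ne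
  -- parent function
  have hP : ∀ u, Gg.dist r u ≠ 0 → ∃ w, Gg.Adj u w ∧ Gg.dist r w + 1 = Gg.dist r u :=
    fun u h => exists_parent hc r u h
  choose! p hpadj hpdist using hP
  have hd0 : ∀ u : Fin N, u ≠ r → Gg.dist r u ≠ 0 := by
    intro u hu h
    exact hu (hc.dist_eq_zero_iff.mp h).symm
  -- the injection
  set f : Fin N → Sym2 (Fin N) :=
    fun u => if 2 ≤ Gg.dist r u then s(u, p (p u)) else s(u, c) with hfdef
  set dom : Set (Fin N) := ({r, c} : Set (Fin N))ᶜ with hdomdef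
  have mem_union_of : ∀ a b k : Fin N, a ≠ b → Gg.Adj a k → Gg.Adj b k →
      s(a, b) ∈ setA Gg ∪ setB Gg := by
    intro a b k hab hak hbk
    by_cases h : Gg.Adj a b
    · exact Or.inl ⟨a, b, rfl, h, k, hak, hbk⟩
    · exact Or.inr ⟨a, b, rfl, hab, h, k, hak, hbk⟩
  have himg : f '' dom ⊆ setA Gg ∪ setB Gg := by
    rintro e ⟨u, hu, rfl⟩
    simp only [hdomdef, Set.mem_compl_iff, Set.mem_insert_iff, Set.mem_singleton_iff,
      not_or] at hu
    obtain ⟨hur, huc⟩ := hu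
    have hdu : Gg.dist r u ≠ 0 := hd0 u hur
    by_cases h2 : 2 ≤ Gg.dist r u
    · have h1 := hpdist u hdu
      have h3 : Gg.dist r (p u) ≠ 0 := by omega
      have h4 := hpdist (p u) h3
      simp only [hfdef, if_pos h2]
      refine mem_union_of u (p (p u)) (p u) ?_ (hpadj u hdu) (hpadj (p u) h3).symm
      intro hEq
      have : Gg.dist r u = Gg.dist r (p (p u)) := by rw [← hEq]
      omega
    · simp only [hfdef, if_neg h2]
      have hd1 : Gg.dist r u = 1 := by omega
      exact mem_union_of u c r huc
        (SimpleGraph.dist_eq_one_iff_adj.mp hd1).symm hradj.symm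
  have hinj : Set.InjOn f dom := by
    intro u hu v hv hEq
    simp only [hdomdef, Set.mem_compl_iff, Set.mem_insert_iff, Set.mem_singleton_iff,
      not_or] at hu hv
    obtain ⟨hur, huc⟩ := hu
    obtain ⟨hvr, hvc⟩ := hv
    have hdu : Gg.dist r u ≠ 0 := hd0 u hur
    have hdv : Gg.dist r v ≠ 0 := hd0 v hvr
    by_cases h2u : 2 ≤ Gg.dist r u <;> by_cases h2v : 2 ≤ Gg.dist r v <;>
      simp only [hfdef, if_pos, if_neg, h2u, h2v, if_true, if_false] at hEq <;>
      rw [Sym2.eq_iff] at hEq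
    · rcases hEq with ⟨h1, -⟩ | ⟨h1, h2⟩
      · exact h1
      · exfalso
        have e1 := hpdist u hdu
        have e2 : Gg.dist r (p u) ≠ 0 := by omega
        have e3 := hpdist (p u) e2
        have e4 := hpdist v hdv
        have e5 : Gg.dist r (p v) ≠ 0 := by omega
        have e6 := hpdist (p v) e5
        have e7 : Gg.dist r u = Gg.dist r (p (p v)) := by rw [h1]
        have e8 : Gg.dist r (p (p u)) = Gg.dist r v := by rw [h2]
        omega
    · exfalso
      rcases hEq with ⟨h1, -⟩ | ⟨h1, -⟩
      · rw [h1] at h2u; omega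
      · rw [h1] at h2u; omega
    · exfalso
      rcases hEq with ⟨h1, -⟩ | ⟨-, h2⟩
      · rw [← h1] at h2v; omega
      · rw [← h2] at h2v; omega
    · rcases hEq with ⟨h1, -⟩ | ⟨h1, -⟩
      · exact h1
      · exact absurd h1 huc
  have hdomcard : dom.ncard = N - 2 := by
    have h1 : ({r, c} : Set (Fin N)).ncard = 2 := Set.ncard_pair hrc
    have h2 := Set.ncard_add_ncard_compl ({r, c} : Set (Fin N))
    rw [← hdomdef] at h2
    have h3 : Nat.card (Fin N) = N := by simp
    omega
  calc N - 2 = dom.ncard := hdomcard.symm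
  _ = (f '' dom).ncard := (Set.ncard_image_of_injOn hinj).symm
  _ ≤ (setA Gg ∪ setB Gg).ncard := Set.ncard_le_ncard himg (Set.toFinite _)

/-- For `N ≥ 2`, every vertex `G` of the triangle-move graph `𝒢_N` has degree at least
`N - 2` and at most `N(N-1)/2`; that is, the number of edges of `G` lying in a triangle
of `G` plus the number of non-edges of `G` whose endpoints have a common neighbor in `G`
lies between `N - 2` and `N(N-1)/2`. -/
theorem graphityGraph_degree_bounds (N : ℕ) (hN : 2 ≤ N) (G : ConnGraph N) :
    (N - 2 ≤ ((GraphityGraph N).neighborSet G).ncard ∧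
      ((GraphityGraph N).neighborSet G).ncard ≤ N * (N - 1) / 2) ∧
    (N - 2 ≤
        {e : Sym2 (Fin N) | ∃ i j : Fin N, e = s(i, j) ∧ G.1.Adj i j ∧
          ∃ k, G.1.Adj i k ∧ G.1.Adj j k}.ncard +
        {e : Sym2 (Fin N) | ∃ i j : Fin N, e = s(i, j) ∧ i ≠ j ∧ ¬ G.1.Adj i j ∧
          ∃ k, G.1.Adj i k ∧ G.1.Adj j k}.ncard ∧
      {e : Sym2 (Fin N) | ∃ i j : Fin N, e = s(i, j) ∧ G.1.Adj i j ∧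
          ∃ k, G.1.Adj i k ∧ G.1.Adj j k}.ncard +
        {e : Sym2 (Fin N) | ∃ i j : Fin N, e = s(i, j) ∧ i ≠ j ∧ ¬ G.1.Adj i j ∧
          ∃ k, G.1.Adj i k ∧ G.1.Adj j k}.ncard ≤ N * (N - 1) / 2) := by
  rw [deg_eq N G]
  exact ⟨⟨union_lb hN G, union_ub N G.1⟩, union_lb hN G, union_ub N G.1⟩
end

section
/- For every real α with 0 < α < 2 there exists N₀ such that for all N ≥ N₀ the following holds. Let π be any probability distribution on the set of labeled connected graphs on N vertices that is positive everywhere and satisfies π(G) < exp(N^α) · π(H) for all pairs of labeled connected graphs G, H on N vertices. Then for every real t ≥ √(N^α · (N choose 2)), the π-probability of the set of labeled connected graphs G whose number of edges differs from (1/2)·(N choose 2) by more than t is at most 8·exp(−N^α). -/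
open scoped Classical

open Finset

open Finset

lemma hoeff_upper (n : ℕ) (hn : 0 < n) (t : ℝ) (ht : 0 ≤ t) :
    ∑ k ∈ Finset.range (n+1), (if (n:ℝ)/2 + t < k then (n.choose k : ℝ) else 0)
      ≤ 2^n * Real.exp (-2 * t^2 / n) := by
  have hn' : (0:ℝ) < n := by exact_mod_cast hn
  set L : ℝ := 4*t/n with hLdef
  have hL : 0 ≤ L := by positivity
  have step1 : ∑ k ∈ Finset.range (n+1), (if (n:ℝ)/2 + t < k then (n.choose k : ℝ) else 0)
      ≤ ∑ k ∈ Finset.range (n+1), (n.choose k : ℝ) * Real.exp (L * ((k:ℝ) - n/2 - t)) := by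
    apply Finset.sum_le_sum
    intro k _
    by_cases h : (n:ℝ)/2 + t < k
    · simp only [h, if_true]
      nth_rewrite 1 [← mul_one (n.choose k : ℝ)]
      apply mul_le_mul_of_nonneg_left _ (by positivity)
      rw [← Real.exp_zero]
      apply Real.exp_le_exp.2
      have : (0:ℝ) ≤ (k:ℝ) - n/2 - t := by linarith
      positivity
    · simp only [h, if_false]
      positivity
  have step2 : ∀ k, (n.choose k : ℝ) * Real.exp (L * ((k:ℝ) - n/2 - t))
      = Real.exp (-(L * (n/2 + t))) * ((Real.exp L)^k * (n.choose k : ℝ)) := by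
    intro k
    have h1 : L * ((k:ℝ) - n/2 - t) = -(L * (n/2 + t)) + (k:ℝ)*L := by ring
    rw [h1, Real.exp_add, Real.exp_nat_mul]
    ring
  have step3 : ∑ k ∈ Finset.range (n+1), ((Real.exp L)^k * (n.choose k : ℝ))
      = (Real.exp L + 1)^n := by
    rw [add_pow]
    apply Finset.sum_congr rfl
    intro k _
    simp [mul_comm]
  have step4 : Real.exp L + 1 ≤ 2 * Real.exp (L/2 + L^2/8) := by
    have hc : Real.cosh (L/2) ≤ Real.exp ((L/2)^2/2) := Real.cosh_le_exp_half_sq _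
    have e1 : Real.exp (L/2) * Real.exp (L/2) = Real.exp L := by
      rw [← Real.exp_add]; ring_nf
    have e2 : Real.exp (L/2) * Real.exp (-(L/2)) = 1 := by
      rw [← Real.exp_add]; simp
    have hcosh : Real.exp L + 1 = Real.exp (L/2) * (2 * Real.cosh (L/2)) := by
      rw [Real.cosh_eq]
      linear_combination -e1 - e2
    rw [hcosh, Real.exp_add]
    calc Real.exp (L/2) * (2 * Real.cosh (L/2))
        ≤ Real.exp (L/2) * (2 * Real.exp ((L/2)^2/2)) := by
          apply mul_le_mul_of_nonneg_left (by linarith) (Real.exp_nonneg _)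
      _ = 2 * (Real.exp (L/2) * Real.exp ((L/2)^2/2)) := by ring
      _ = 2 * (Real.exp (L/2) * Real.exp (L^2/8)) := by ring_nf
  calc ∑ k ∈ Finset.range (n+1), (if (n:ℝ)/2 + t < k then (n.choose k : ℝ) else 0)
      ≤ ∑ k ∈ Finset.range (n+1), (n.choose k : ℝ) * Real.exp (L * ((k:ℝ) - n/2 - t)) := step1
    _ = Real.exp (-(L * (n/2 + t))) * (Real.exp L + 1)^n := by
        rw [← step3, Finset.mul_sum]
        exact Finset.sum_congr rfl fun k _ => step2 k
    _ ≤ Real.exp (-(L * (n/2 + t))) * (2 * Real.exp (L/2 + L^2/8))^n := by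
        apply mul_le_mul_of_nonneg_left _ (Real.exp_nonneg _)
        apply pow_le_pow_left₀ (by positivity) step4
    _ = 2^n * Real.exp (-(L * (n/2 + t)) + n * (L/2 + L^2/8)) := by
        rw [mul_pow, ← Real.exp_nat_mul, Real.exp_add]
        ring
    _ = 2^n * Real.exp (-2 * t^2 / n) := by
        congr 1
        congr 1
        rw [hLdef]
        field_simp
        ring

lemma hoeff_lower (n : ℕ) (hn : 0 < n) (t : ℝ) (ht : 0 ≤ t) :
    ∑ k ∈ Finset.range (n+1), (if (k:ℝ) < (n:ℝ)/2 - t then (n.choose k : ℝ) else 0)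
      ≤ 2^n * Real.exp (-2 * t^2 / n) := by
  have := Finset.sum_range_reflect
    (fun k => if (k:ℝ) < (n:ℝ)/2 - t then (n.choose k : ℝ) else 0) (n+1)
  simp only [Nat.add_sub_cancel] at this
  rw [← this]
  have heq : ∀ j ∈ Finset.range (n+1),
      (if ((n - j : ℕ):ℝ) < (n:ℝ)/2 - t then ((n.choose (n - j)) : ℝ) else 0)
      = (if (n:ℝ)/2 + t < (j:ℝ) then ((n.choose j) : ℝ) else 0) := by
    intro j hj
    have hjn : j ≤ n := Nat.lt_succ_iff.mp (Finset.mem_range.mp hj)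
    have hcast : ((n - j : ℕ):ℝ) = (n:ℝ) - j := by
      rw [Nat.cast_sub hjn]
    rw [hcast, Nat.choose_symm hjn]
    congr 1
    simp only [eq_iff_iff]
    constructor <;> intro h <;> linarith
  rw [Finset.sum_congr rfl heq]
  exact hoeff_upper n hn t ht

lemma hoeff_two (n : ℕ) (hn : 0 < n) (t : ℝ) (ht : 0 ≤ t) :
    ∑ k ∈ Finset.range (n+1), (if t < |(k:ℝ) - (n:ℝ)/2| then (n.choose k : ℝ) else 0)
      ≤ 2 * 2^n * Real.exp (-2 * t^2 / n) := by
  have hpt : ∀ k ∈ Finset.range (n+1),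
      (if t < |(k:ℝ) - (n:ℝ)/2| then (n.choose k : ℝ) else 0)
      ≤ (if (n:ℝ)/2 + t < (k:ℝ) then (n.choose k : ℝ) else 0)
        + (if (k:ℝ) < (n:ℝ)/2 - t then (n.choose k : ℝ) else 0) := by
    intro k _
    by_cases h : t < |(k:ℝ) - (n:ℝ)/2|
    · simp only [h, if_true]
      rcases abs_cases ((k:ℝ) - (n:ℝ)/2) with ⟨he, _⟩ | ⟨he, _⟩
      · have h1 : (n:ℝ)/2 + t < k := by rw [he] at h; linarith
        have h2 : ¬ ((k:ℝ) < (n:ℝ)/2 - t) := by push_neg; linarith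
        simp [h1, h2]
      · have h1 : (k:ℝ) < (n:ℝ)/2 - t := by rw [he] at h; linarith
        have h2 : ¬ ((n:ℝ)/2 + t < (k:ℝ)) := by push_neg; linarith
        simp [h1, h2]
    · simp only [h, if_false]
      positivity
  calc ∑ k ∈ Finset.range (n+1), (if t < |(k:ℝ) - (n:ℝ)/2| then (n.choose k : ℝ) else 0)
      ≤ ∑ k ∈ Finset.range (n+1), ((if (n:ℝ)/2 + t < (k:ℝ) then (n.choose k : ℝ) else 0)
        + (if (k:ℝ) < (n:ℝ)/2 - t then (n.choose k : ℝ) else 0)) := Finset.sum_le_sum hpt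
    _ = _ + _ := Finset.sum_add_distrib
    _ ≤ 2^n * Real.exp (-2 * t^2 / n) + 2^n * Real.exp (-2 * t^2 / n) :=
        add_le_add (hoeff_upper n hn t ht) (hoeff_lower n hn t ht)
    _ = 2 * 2^n * Real.exp (-2 * t^2 / n) := by ring

open scoped Classical

noncomputable def EU (N : ℕ) : Finset (Sym2 (Fin N)) := (⊤ : SimpleGraph (Fin N)).edgeFinset

lemma EU_card (N : ℕ) : (EU N).card = N.choose 2 := by
  rw [EU, SimpleGraph.card_edgeFinset_top_eq_card_choose_two, Fintype.card_fin]

lemma card_filter_graphs (N : ℕ) (P : SimpleGraph (Fin N) → Prop)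
    (Q : Finset (Sym2 (Fin N)) → Prop)
    (hPQ : ∀ G : SimpleGraph (Fin N), P G ↔ Q G.edgeFinset) :
    (Finset.univ.filter P).card = ((EU N).powerset.filter Q).card := by
  apply Finset.card_bij (fun G _ => G.edgeFinset)
  · intro G hG
    rw [Finset.mem_filter] at hG ⊢
    refine ⟨Finset.mem_powerset.mpr (SimpleGraph.edgeFinset_mono le_top), ?_⟩
    exact (hPQ G).mp hG.2
  · intro G₁ _ G₂ _ h
    exact SimpleGraph.edgeFinset_inj.mp h
  · intro A hA
    rw [Finset.mem_filter, Finset.mem_powerset] at hA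
    set G := SimpleGraph.fromEdgeSet (↑A : Set (Sym2 (Fin N))) with hGdef
    have hsub : (↑A : Set (Sym2 (Fin N))) ⊆ (⊤ : SimpleGraph (Fin N)).edgeSet := by
      rw [← SimpleGraph.coe_edgeFinset]
      exact_mod_cast hA.1
    have hES : G.edgeSet = (↑A : Set (Sym2 (Fin N))) := by
      rw [hGdef, SimpleGraph.edgeSet_fromEdgeSet]
      ext e
      simp only [Set.mem_diff, Set.mem_setOf_eq, and_iff_left_iff_imp]
      intro he
      have := hsub he
      rw [SimpleGraph.edgeSet_top] at this
      exact this
    have hEF : ∀ (inst : Fintype G.edgeSet), @SimpleGraph.edgeFinset _ G inst = A := by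
      intro inst
      apply Finset.coe_injective
      rw [SimpleGraph.coe_edgeFinset, hES]
    refine ⟨G, ?_, hEF _⟩
    rw [Finset.mem_filter]
    refine ⟨Finset.mem_univ _, (hPQ G).mpr ?_⟩
    rw [hEF _]
    exact hA.2

lemma card_powerset_filter_card {β : Type*} [DecidableEq β] (U : Finset β) (p : ℕ → Prop) :
    ((U.powerset.filter (fun A => p A.card)).card : ℝ)
      = ∑ k ∈ Finset.range (U.card + 1), (if p k then (U.card.choose k : ℝ) else 0) := by
  rw [Finset.card_eq_sum_card_fiberwise
    (f := Finset.card) (t := Finset.range (U.card + 1)) ?_]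
  · push_cast
    apply Finset.sum_congr rfl
    intro k _
    by_cases hp : p k
    · have : (U.powerset.filter (fun A => p A.card)).filter (fun A => A.card = k)
          = U.powersetCard k := by
        ext A
        simp only [Finset.mem_filter, Finset.mem_powerset, Finset.mem_powersetCard]
        constructor
        · rintro ⟨⟨h1, _⟩, h3⟩; exact ⟨h1, h3⟩
        · rintro ⟨h1, h2⟩; exact ⟨⟨h1, h2 ▸ hp⟩, h2⟩
      rw [this, Finset.card_powersetCard]
      simp [hp]
    · have : (U.powerset.filter (fun A => p A.card)).filter (fun A => A.card = k)
          = ∅ := by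
        ext A
        simp only [Finset.mem_filter, Finset.notMem_empty, iff_false, not_and]
        rintro ⟨_, h2⟩ h3
        exact hp (h3 ▸ h2)
      rw [this]
      simp [hp]
  · intro A hA
    rw [Finset.mem_coe, Finset.mem_filter, Finset.mem_powerset] at hA
    rw [Finset.mem_coe, Finset.mem_range, Nat.lt_succ_iff]
    exact Finset.card_le_card hA.1

noncomputable def CrossF {N : ℕ} (S : Finset (Fin N)) : Finset (Sym2 (Fin N)) :=
  Finset.image (fun p : Fin N × Fin N => s(p.1, p.2)) (S ×ˢ Sᶜ)

lemma CrossF_subset {N : ℕ} (S : Finset (Fin N)) : CrossF S ⊆ EU N := by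
  intro e he
  rw [CrossF, Finset.mem_image] at he
  obtain ⟨⟨i, j⟩, hij, rfl⟩ := he
  rw [Finset.mem_product, Finset.mem_compl] at hij
  rw [EU, SimpleGraph.mem_edgeFinset, SimpleGraph.mem_edgeSet, SimpleGraph.top_adj]
  intro h
  exact hij.2 (h ▸ hij.1)

lemma CrossF_card {N : ℕ} (S : Finset (Fin N)) :
    (CrossF S).card = S.card * (N - S.card) := by
  rw [CrossF, Finset.card_image_of_injOn, Finset.card_product, Finset.card_compl,
    Fintype.card_fin]
  rintro ⟨i, j⟩ hij ⟨a, b⟩ hab h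
  rw [Finset.mem_coe, Finset.mem_product, Finset.mem_compl] at hij hab
  simp only [Sym2.eq_iff] at h
  rcases h with ⟨rfl, rfl⟩ | ⟨rfl, rfl⟩
  · rfl
  · exact absurd hab.1 hij.2

def NoCrossP {N : ℕ} (S : Finset (Fin N)) (G : SimpleGraph (Fin N)) : Prop :=
  ∀ i j, i ∈ S → j ∉ S → ¬ G.Adj i j

lemma noCross_iff {N : ℕ} (S : Finset (Fin N)) (G : SimpleGraph (Fin N)) :
    NoCrossP S G ↔ Disjoint G.edgeFinset (CrossF S) := by
  constructor
  · intro h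
    rw [Finset.disjoint_left]
    intro e heG heC
    rw [CrossF, Finset.mem_image] at heC
    obtain ⟨⟨i, j⟩, hij, rfl⟩ := heC
    rw [Finset.mem_product, Finset.mem_compl] at hij
    rw [SimpleGraph.mem_edgeFinset, SimpleGraph.mem_edgeSet] at heG
    exact h i j hij.1 hij.2 heG
  · intro h i j hi hj hadj
    have he1 : s(i, j) ∈ G.edgeFinset := by
      rw [SimpleGraph.mem_edgeFinset, SimpleGraph.mem_edgeSet]; exact hadj
    have he2 : s(i, j) ∈ CrossF S := by
      rw [CrossF, Finset.mem_image]
      exact ⟨(i, j), by rw [Finset.mem_product, Finset.mem_compl]; exact ⟨hi, hj⟩, rfl⟩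
    exact Finset.disjoint_left.mp h he1 he2

lemma noCross_card {N : ℕ} (S : Finset (Fin N)) :
    (Finset.univ.filter (fun G : SimpleGraph (Fin N) => NoCrossP S G)).card
      = 2 ^ (N.choose 2 - S.card * (N - S.card)) := by
  rw [card_filter_graphs N _ (fun A => Disjoint A (CrossF S)) (fun G => noCross_iff S G)]
  have hcard : ((EU N).powerset.filter (fun A => Disjoint A (CrossF S))).card
      = ((EU N \ CrossF S).powerset).card := by
    congr 1
    ext A
    rw [Finset.mem_filter, Finset.mem_powerset, Finset.mem_powerset, Finset.subset_sdiff]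
  rw [Finset.card_powerset, Finset.card_sdiff_of_subset (CrossF_subset S), EU_card, CrossF_card] at hcard
  convert hcard using 3

lemma eight_mul_le (N : ℕ) (h : 6 ≤ N) : 8 * N ≤ 2 ^ N := by
  induction N, h using Nat.le_induction with
  | base => norm_num
  | succ n hn ih =>
    have h8 : 8 ≤ 2 ^ n := by
      calc (8:ℕ) = 2^3 := by norm_num
        _ ≤ 2^n := Nat.pow_le_pow_right (by norm_num) (by omega)
    have : 2^(n+1) = 2^n + 2^n := by rw [pow_succ]; omega
    omega

lemma disconn_card_bound (N : ℕ) (hN : 6 ≤ N) :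
    4 * (Finset.univ.filter (fun G : SimpleGraph (Fin N) => ¬ G.Connected)).card
      ≤ 3 * 2 ^ (N.choose 2) := by
  have hNpos : 0 < N := by omega
  set v0 : Fin N := ⟨0, hNpos⟩ with hv0
  set 𝒮 : Finset (Finset (Fin N)) :=
    Finset.univ.filter (fun S => v0 ∈ S ∧ S ≠ Finset.univ) with h𝒮
  -- Step A: disconnected graphs are covered by the no-cross families
  have hsub : (Finset.univ.filter (fun G : SimpleGraph (Fin N) => ¬ G.Connected))
      ⊆ 𝒮.biUnion (fun S => Finset.univ.filter (fun G => NoCrossP S G)) := by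
    intro G hG
    rw [Finset.mem_filter] at hG
    have hG' := hG.2
    set S : Finset (Fin N) := Finset.univ.filter (fun v => G.Reachable v0 v) with hS
    have hv0S : v0 ∈ S := by
      rw [hS, Finset.mem_filter]; exact ⟨Finset.mem_univ _, SimpleGraph.Reachable.refl _⟩
    have hpre : ¬ G.Preconnected := by
      intro h
      exact hG' ((SimpleGraph.connected_iff G).mpr ⟨h, ⟨v0⟩⟩)
    have hw : ∃ w, ¬ G.Reachable v0 w := by
      rw [SimpleGraph.Preconnected] at hpre
      push_neg at hpre
      obtain ⟨u, v, huv⟩ := hpre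
      by_cases h : G.Reachable v0 u
      · exact ⟨v, fun h2 => huv (h.symm.trans h2)⟩
      · exact ⟨u, h⟩
    obtain ⟨w, hw⟩ := hw
    have hSne : S ≠ Finset.univ := by
      intro h
      apply hw
      have : w ∈ S := h ▸ Finset.mem_univ w
      rw [hS, Finset.mem_filter] at this
      exact this.2
    rw [Finset.mem_biUnion]
    refine ⟨S, ?_, ?_⟩
    · rw [h𝒮, Finset.mem_filter]; exact ⟨Finset.mem_univ _, hv0S, hSne⟩
    · rw [Finset.mem_filter]
      refine ⟨Finset.mem_univ _, ?_⟩
      intro i j hi hj hadj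
      apply hj
      rw [hS, Finset.mem_filter] at hi ⊢
      exact ⟨Finset.mem_univ _, hi.2.trans hadj.reachable⟩
  -- Step B
  have hD : (Finset.univ.filter (fun G : SimpleGraph (Fin N) => ¬ G.Connected)).card
      ≤ ∑ S ∈ 𝒮, 2 ^ (N.choose 2 - S.card * (N - S.card)) := by
    calc _ ≤ (𝒮.biUnion (fun S => Finset.univ.filter (fun G => NoCrossP S G))).card :=
          Finset.card_le_card hsub
      _ ≤ ∑ S ∈ 𝒮, (Finset.univ.filter (fun G => NoCrossP S G)).card :=
          Finset.card_biUnion_le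
      _ = ∑ S ∈ 𝒮, 2 ^ (N.choose 2 - S.card * (N - S.card)) :=
          Finset.sum_congr rfl (fun S _ => noCross_card S)
  -- Step C: split the sum
  set p : Finset (Fin N) → Prop := fun S => S.card = 1 ∨ S.card = N - 1 with hp
  have hsplit : ∑ S ∈ 𝒮, 2 ^ (N.choose 2 - S.card * (N - S.card))
      = ∑ S ∈ 𝒮.filter p, 2 ^ (N.choose 2 - S.card * (N - S.card))
        + ∑ S ∈ 𝒮.filter (fun S => ¬ p S), 2 ^ (N.choose 2 - S.card * (N - S.card)) :=
    (Finset.sum_filter_add_sum_filter_not 𝒮 p _).symm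
  have hb1 : ∑ S ∈ 𝒮.filter p, 2 ^ (N.choose 2 - S.card * (N - S.card))
      ≤ (2 * N) * 2 ^ (N.choose 2 - (N - 1)) := by
    have hcard1 : (𝒮.filter p).card ≤ 2 * N := by
      have hss : 𝒮.filter p ⊆
          Finset.univ.powersetCard 1 ∪ Finset.univ.powersetCard (N - 1) := by
        intro S hSm
        rw [Finset.mem_filter] at hSm
        rw [Finset.mem_union, Finset.mem_powersetCard_univ, Finset.mem_powersetCard_univ]
        exact hSm.2
      calc (𝒮.filter p).card
          ≤ (Finset.univ.powersetCard 1 ∪ Finset.univ.powersetCard (N-1)).card :=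
            Finset.card_le_card hss
        _ ≤ (Finset.univ.powersetCard 1 : Finset (Finset (Fin N))).card
            + (Finset.univ.powersetCard (N-1) : Finset (Finset (Fin N))).card :=
            Finset.card_union_le _ _
        _ ≤ 2 * N := by
            rw [Finset.card_powersetCard, Finset.card_powersetCard, Finset.card_univ,
              Fintype.card_fin, Nat.choose_one_right]
            have : N.choose (N - 1) = N := by
              have := Nat.choose_symm (show 1 ≤ N by omega) (n := N)
              simp only [Nat.choose_one_right] at this
              omega
            omega
    have hval : ∀ S ∈ 𝒮.filter p, 2 ^ (N.choose 2 - S.card * (N - S.card))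
        ≤ 2 ^ (N.choose 2 - (N - 1)) := by
      intro S hSm
      rw [Finset.mem_filter] at hSm
      rcases hSm.2 with h1 | h1 <;> rw [h1]
      · simp
      · have : (N - 1) * (N - (N - 1)) = N - 1 := by
          have : N - (N - 1) = 1 := by omega
          rw [this, mul_one]
        rw [this]
    calc ∑ S ∈ 𝒮.filter p, 2 ^ (N.choose 2 - S.card * (N - S.card))
        ≤ (𝒮.filter p).card * 2 ^ (N.choose 2 - (N - 1)) := by
          have := Finset.sum_le_card_nsmul (𝒮.filter p) _ _ hval
          simpa [smul_eq_mul] using this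
      _ ≤ (2 * N) * 2 ^ (N.choose 2 - (N - 1)) :=
          Nat.mul_le_mul_right _ hcard1
  have hb2 : ∑ S ∈ 𝒮.filter (fun S => ¬ p S), 2 ^ (N.choose 2 - S.card * (N - S.card))
      ≤ 2 ^ N * 2 ^ (N.choose 2 - 2 * (N - 2)) := by
    have hcard2 : (𝒮.filter (fun S => ¬ p S)).card ≤ 2 ^ N := by
      calc (𝒮.filter (fun S => ¬ p S)).card ≤ Fintype.card (Finset (Fin N)) :=
            Finset.card_le_univ _
        _ = 2 ^ N := by rw [Fintype.card_finset, Fintype.card_fin]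
    have hval : ∀ S ∈ 𝒮.filter (fun S => ¬ p S),
        2 ^ (N.choose 2 - S.card * (N - S.card)) ≤ 2 ^ (N.choose 2 - 2 * (N - 2)) := by
      intro S hSm
      rw [Finset.mem_filter, h𝒮, Finset.mem_filter] at hSm
      obtain ⟨⟨-, hv0S, hSne⟩, hnp⟩ := hSm
      have hge1 : 1 ≤ S.card := Finset.card_pos.mpr ⟨v0, hv0S⟩
      have hleN : S.card < N := by
        have h1 : S.card ≤ N := by
          calc S.card ≤ Fintype.card (Fin N) := Finset.card_le_univ S
            _ = N := Fintype.card_fin N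
        rcases lt_or_eq_of_le h1 with h | h
        · exact h
        · exact absurd (Finset.card_eq_iff_eq_univ S |>.mp (by rw [h, Fintype.card_fin])) hSne
      rw [hp] at hnp
      push_neg at hnp
      have hk2 : 2 ≤ S.card := by omega
      have hkN2 : S.card ≤ N - 2 := by omega
      have hbb : 2 * (N - 2) ≤ S.card * (N - S.card) := by
        obtain ⟨m, hm⟩ : ∃ m, N = S.card + m := ⟨N - S.card, by omega⟩
        have hm2 : 2 ≤ m := by omega
        have key : 2 * m + 2 * S.card ≤ S.card * m + 4 := by nlinarith
        have hNk : N - S.card = m := by omega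
        rw [hNk]
        omega
      exact Nat.pow_le_pow_right (by norm_num) (Nat.sub_le_sub_left hbb _)
    calc ∑ S ∈ 𝒮.filter (fun S => ¬ p S), 2 ^ (N.choose 2 - S.card * (N - S.card))
        ≤ (𝒮.filter (fun S => ¬ p S)).card * 2 ^ (N.choose 2 - 2 * (N - 2)) := by
          have := Finset.sum_le_card_nsmul (𝒮.filter (fun S => ¬ p S)) _ _ hval
          simpa [smul_eq_mul] using this
      _ ≤ 2 ^ N * 2 ^ (N.choose 2 - 2 * (N - 2)) := Nat.mul_le_mul_right _ hcard2
  -- Step D: arithmetic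
  have hC2 : 2 * N.choose 2 = N * (N - 1) := by
    rw [Nat.choose_two_right]
    have heven : 2 ∣ N * (N - 1) := by
      rcases Nat.even_or_odd N with h | h
      · exact Dvd.dvd.mul_right h.two_dvd _
      · have : Even (N - 1) := by
          rcases h with ⟨m, hm⟩; exact ⟨m, by omega⟩
        exact Dvd.dvd.mul_left this.two_dvd _
    exact Nat.mul_div_cancel' heven
  have h1 : N - 1 ≤ N.choose 2 := by
    have : 2 * (N - 1) ≤ N * (N - 1) := Nat.mul_le_mul_right _ (by omega)
    omega
  have h2 : 2 * (N - 2) ≤ N.choose 2 := by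
    have e1 : 4 * (N - 2) ≤ (N - 1) * (N - 2) := Nat.mul_le_mul_right _ (by omega)
    have e2 : (N - 1) * (N - 2) ≤ (N - 1) * N := Nat.mul_le_mul_left _ (by omega)
    have e3 : (N - 1) * N = N * (N - 1) := Nat.mul_comm _ _
    omega
  have g1 : 4 * ((2 * N) * 2 ^ (N.choose 2 - (N - 1))) ≤ 2 * 2 ^ (N.choose 2) := by
    have e1 : 2 ^ (N.choose 2) = 2 ^ (N - 1) * 2 ^ (N.choose 2 - (N - 1)) := by
      rw [← pow_add]; congr 1; omega
    have e2 : 2 * 2 ^ (N - 1) = 2 ^ N := by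
      rw [← pow_succ']; congr 1; omega
    calc 4 * ((2 * N) * 2 ^ (N.choose 2 - (N - 1)))
        = (8 * N) * 2 ^ (N.choose 2 - (N - 1)) := by ring
      _ ≤ 2 ^ N * 2 ^ (N.choose 2 - (N - 1)) := Nat.mul_le_mul_right _ (eight_mul_le N hN)
      _ = 2 * 2 ^ (N.choose 2) := by rw [e1, ← e2]; ring
  have g2 : 4 * (2 ^ N * 2 ^ (N.choose 2 - 2 * (N - 2))) ≤ 2 ^ (N.choose 2) := by
    have e1 : 2 ^ (N.choose 2) = 2 ^ (2 * (N - 2)) * 2 ^ (N.choose 2 - 2 * (N - 2)) := by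
      rw [← pow_add]; congr 1; omega
    rw [e1, ← mul_assoc]
    apply Nat.mul_le_mul_right
    calc 4 * 2 ^ N = 2 ^ (N + 2) := by rw [pow_add]; ring
      _ ≤ 2 ^ (2 * (N - 2)) := Nat.pow_le_pow_right (by norm_num) (by omega)
  omega


lemma total_graph_card (N : ℕ) :
    Fintype.card (SimpleGraph (Fin N)) = 2 ^ (N.choose 2) := by
  have h := card_filter_graphs N (fun _ => True) (fun _ => True) (fun _ => Iff.rfl)
  simp only [Finset.filter_true] at h
  rw [Finset.card_powerset, EU_card] at h
  rw [← Finset.card_univ, h]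

lemma conn_card_lb (N : ℕ) (hN : 6 ≤ N) :
    2 ^ (N.choose 2) ≤ 4 * (Fintype.card (ConnGraph N)) := by
  have hsplit : (Finset.univ.filter (fun G : SimpleGraph (Fin N) => G.Connected)).card
      + (Finset.univ.filter (fun G : SimpleGraph (Fin N) => ¬ G.Connected)).card
      = 2 ^ (N.choose 2) := by
    rw [Finset.card_filter_add_card_filter_not, Finset.card_univ, total_graph_card]
  have hd := disconn_card_bound N hN
  have hcc : Fintype.card (ConnGraph N)
      = (Finset.univ.filter (fun G : SimpleGraph (Fin N) => G.Connected)).card :=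
    Fintype.card_subtype (fun G : SimpleGraph (Fin N) => G.Connected)
  omega

lemma bad_card_bound (N : ℕ) (hN : 2 ≤ N) (t : ℝ) (ht : 0 ≤ t) :
    ((Finset.univ.filter (fun G : SimpleGraph (Fin N) =>
        t < |((G.edgeFinset.card : ℕ) : ℝ) - ((N.choose 2 : ℕ) : ℝ)/2|)).card : ℝ)
      ≤ 2 * 2 ^ (N.choose 2) * Real.exp (-2 * t^2 / (N.choose 2)) := by
  have hC : 0 < N.choose 2 := Nat.choose_pos hN
  rw [card_filter_graphs N _
    (fun A : Finset (Sym2 (Fin N)) => t < |((A.card : ℕ) : ℝ) - ((N.choose 2 : ℕ) : ℝ)/2|)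
    (fun G => Iff.rfl)]
  have h2 := card_powerset_filter_card (EU N)
    (fun k => t < |((k : ℕ) : ℝ) - ((N.choose 2 : ℕ) : ℝ)/2|)
  rw [EU_card] at h2
  rw [h2]
  exact hoeff_two (N.choose 2) hC t ht

/-- Deviation bound: for `0 < α < 2` and all large `N`, any everywhere-positive
probability distribution `π` on labeled connected graphs on `N` vertices with
`π(G) < exp(N^α)·π(H)` for all pairs satisfies, for all `t ≥ √(N^α · (N choose 2))`,
`Prob[ | |E(G)| − (1/2)(N choose 2) | > t ] ≤ 8 exp(−N^α)`. -/
theorem edge_count_deviation_bound (α : ℝ) (hα0 : 0 < α) (hα2 : α < 2) :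
    ∃ N₀ : ℕ, ∀ N : ℕ, N₀ ≤ N →
      ∀ π : ConnGraph N → ℝ, (∀ G, 0 < π G) → (∑ G : ConnGraph N, π G = 1) →
        (∀ G H : ConnGraph N, π G < Real.exp ((N : ℝ) ^ α) * π H) →
        ∀ t : ℝ, Real.sqrt ((N : ℝ) ^ α * (N.choose 2 : ℝ)) ≤ t →
          ∑ G ∈ Finset.univ.filter
              (fun G : ConnGraph N =>
                t < |(edgeCount G.1 : ℝ) - (1 / 2) * (N.choose 2 : ℝ)|),
            π G ≤ 8 * Real.exp (-(N : ℝ) ^ α) := by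
  refine ⟨6, fun N hN π hpos hsum hratio t ht => ?_⟩
  have hN2 : 2 ≤ N := by omega
  have hNe : Nonempty (Fin N) := ⟨⟨0, by omega⟩⟩
  set C : ℕ := N.choose 2 with hCdef
  have hC : 0 < C := Nat.choose_pos hN2
  have hCR : (0:ℝ) < C := by exact_mod_cast hC
  set A : ℝ := (N:ℝ)^α with hA
  have hA0 : 0 ≤ A := Real.rpow_nonneg (by positivity) α
  have ht0 : 0 ≤ t := le_trans (Real.sqrt_nonneg _) ht
  have ht2 : A * C ≤ t^2 := by
    have h1 : Real.sqrt (A * C) ^ 2 = A * C := Real.sq_sqrt (by positivity)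
    calc A * C = Real.sqrt (A*C)^2 := h1.symm
      _ ≤ t^2 := pow_le_pow_left₀ (Real.sqrt_nonneg _) ht 2
  have hKne : Nonempty (ConnGraph N) := ⟨⟨⊤, SimpleGraph.connected_top⟩⟩
  have hKpos : 0 < Fintype.card (ConnGraph N) := Fintype.card_pos
  set Kc : ℝ := (Fintype.card (ConnGraph N) : ℝ) with hKc
  have hKR : (0:ℝ) < Kc := by rw [hKc]; exact_mod_cast hKpos
  have hpt : ∀ G : ConnGraph N, π G ≤ Real.exp A / Kc := by
    intro G
    have h2 : ∑ _H : ConnGraph N, π G ≤ ∑ H : ConnGraph N, Real.exp A * π H :=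
      Finset.sum_le_sum (fun H _ => le_of_lt (hratio G H))
    rw [Finset.sum_const, Finset.card_univ, ← Finset.mul_sum, hsum, mul_one,
      nsmul_eq_mul] at h2
    rw [le_div_iff₀ hKR]
    calc π G * Kc = Kc * π G := by ring
      _ = (Fintype.card (ConnGraph N) : ℝ) * π G := by rw [hKc]
      _ ≤ Real.exp A := h2
  set B := Finset.univ.filter
    (fun G : ConnGraph N => t < |(edgeCount G.1 : ℝ) - (1/2) * (C:ℝ)|) with hB
  have hBcard : (B.card : ℝ) ≤ 2 * 2^C * Real.exp (-2 * t^2 / C) := by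
    have hinj : B.card ≤ (Finset.univ.filter (fun G : SimpleGraph (Fin N) =>
        t < |((G.edgeFinset.card : ℕ) : ℝ) - ((C:ℕ):ℝ)/2|)).card := by
      apply Finset.card_le_card_of_injOn (fun G => G.1)
      · intro G hG
        rw [hB, Finset.mem_coe, Finset.mem_filter] at hG
        rw [Finset.mem_coe, Finset.mem_filter]
        refine ⟨Finset.mem_univ _, ?_⟩
        have he : (edgeCount G.1 : ℝ) = ((G.1.edgeFinset.card : ℕ) : ℝ) := by
          rw [edgeCount, ← SimpleGraph.coe_edgeFinset, Set.ncard_coe_finset]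
        have hhalf : (1/2:ℝ)*(C:ℝ) = ((C:ℕ):ℝ)/2 := by ring
        rw [← he, ← hhalf]
        exact hG.2
      · intro G _ H _ h
        exact Subtype.ext h
    calc (B.card : ℝ) ≤ _ := by exact_mod_cast hinj
      _ ≤ 2*2^C*Real.exp (-2*t^2/C) := bad_card_bound N hN2 t ht0
  have hexp : Real.exp (-2*t^2/C) ≤ Real.exp (-(2*A)) := by
    apply Real.exp_le_exp.2
    rw [div_le_iff₀ hCR]
    nlinarith [ht2]
  have hBX : (B.card : ℝ) ≤ 2 * 2^C * Real.exp (-(2*A)) := by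
    calc (B.card : ℝ) ≤ 2 * 2^C * Real.exp (-2 * t^2 / C) := hBcard
      _ ≤ 2 * 2^C * Real.exp (-(2*A)) := by
          apply mul_le_mul_of_nonneg_left hexp (by positivity)
  have hKc4 : (2:ℝ)^C / 4 ≤ Kc := by
    have := conn_card_lb N hN
    have hcast : (2:ℝ)^C ≤ 4 * Kc := by rw [hKc]; exact_mod_cast this
    linarith
  have hsumB : ∑ G ∈ B, π G ≤ (B.card : ℝ) * (Real.exp A / Kc) := by
    have h := Finset.sum_le_card_nsmul B π _ (fun G _ => hpt G)
    simpa [smul_eq_mul] using h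
  have hee : Real.exp (-(2*A)) * Real.exp A = Real.exp (-A) := by
    rw [← Real.exp_add]; congr 1; ring
  have hfinal : (2*2^C*Real.exp (-(2*A))) * (Real.exp A / ((2:ℝ)^C/4))
      = 8 * Real.exp (-A) := by
    have h2C : ((2:ℝ)^C) ≠ 0 := by positivity
    field_simp
    linear_combination 8 * hee
  calc ∑ G ∈ B, π G ≤ (B.card : ℝ) * (Real.exp A / Kc) := hsumB
    _ ≤ (2*2^C*Real.exp (-(2*A))) * (Real.exp A / ((2:ℝ)^C/4)) := by
        apply mul_le_mul hBX ?_ (by positivity) (by positivity)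
        apply div_le_div_of_nonneg_left (Real.exp_nonneg _) (by positivity) hKc4
    _ = 8 * Real.exp (-A) := hfinal
end

section
/- For every real α with 0 < α < 2 and every ε > 0 there exists N₀ such that for all N ≥ N₀ the following holds. Let π be any probability distribution on the set of labeled connected graphs on N vertices that is positive everywhere and satisfies π(G) < exp(N^α) · π(H) for all pairs of labeled connected graphs G, H on N vertices. Then the expected number of edges under π satisfies |Σ_G π(G)·|E(G)| − (1/2)·(N choose 2)| ≤ ε · (N choose 2), where the sum ranges over all labeled connected graphs G on N vertices and |E(G)| is the number of edges of G. -/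
open scoped Classical

/- ### Auxiliary lemmas -/

private lemma sum_pow_card_powerset {ι : Type*} (K : Finset ι) (x : ℝ) :
    ∑ A ∈ K.powerset, x ^ A.card = (x + 1) ^ K.card := by
  classical
  have h := Finset.prod_add (fun _ : ι => x) (fun _ : ι => 1) K
  simp only [Finset.prod_const, one_pow, mul_one] at h
  exact h.symm

private lemma tail_card_low {ι : Type*} (K : Finset ι) (r lam : ℝ) (hlam : 0 ≤ lam) :
    (((K.powerset.filter (fun A => (A.card : ℝ) ≤ r)).card : ℝ))
      ≤ Real.exp (lam * r) * (Real.exp (-lam) + 1) ^ K.card := by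
  classical
  set s := K.powerset.filter (fun A => (A.card : ℝ) ≤ r) with hs
  have hsum : ∑ A ∈ s, Real.exp (-lam) ^ A.card ≤ (Real.exp (-lam) + 1) ^ K.card := by
    rw [← sum_pow_card_powerset K (Real.exp (-lam))]
    exact Finset.sum_le_sum_of_subset_of_nonneg (Finset.filter_subset _ _)
      (fun A _ _ => pow_nonneg (Real.exp_pos _).le _)
  have hcard : ((s.card : ℝ)) * Real.exp (-(lam * r)) ≤ ∑ A ∈ s, Real.exp (-lam) ^ A.card := by
    rw [← nsmul_eq_mul, ← Finset.sum_const]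
    refine Finset.sum_le_sum fun A hA => ?_
    have hAr : (A.card : ℝ) ≤ r := (Finset.mem_filter.mp hA).2
    rw [← Real.exp_nat_mul]
    apply Real.exp_le_exp.mpr
    have := mul_le_mul_of_nonneg_left hAr hlam
    nlinarith
  have h := hcard.trans hsum
  calc ((s.card : ℝ)) = (s.card : ℝ) * Real.exp (-(lam * r)) * Real.exp (lam * r) := by
        rw [mul_assoc, ← Real.exp_add]; simp
    _ ≤ (Real.exp (-lam) + 1) ^ K.card * Real.exp (lam * r) :=
        mul_le_mul_of_nonneg_right h (Real.exp_pos _).le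
    _ = Real.exp (lam * r) * (Real.exp (-lam) + 1) ^ K.card := mul_comm _ _

private lemma tail_card_high {ι : Type*} (K : Finset ι) (r lam : ℝ) (hlam : 0 ≤ lam) :
    (((K.powerset.filter (fun A => r ≤ (A.card : ℝ))).card : ℝ))
      ≤ Real.exp (-(lam * r)) * (Real.exp lam + 1) ^ K.card := by
  classical
  set s := K.powerset.filter (fun A => r ≤ (A.card : ℝ)) with hs
  have hsum : ∑ A ∈ s, Real.exp lam ^ A.card ≤ (Real.exp lam + 1) ^ K.card := by
    rw [← sum_pow_card_powerset K (Real.exp lam)]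
    exact Finset.sum_le_sum_of_subset_of_nonneg (Finset.filter_subset _ _)
      (fun A _ _ => pow_nonneg (Real.exp_pos _).le _)
  have hcard : ((s.card : ℝ)) * Real.exp (lam * r) ≤ ∑ A ∈ s, Real.exp lam ^ A.card := by
    rw [← nsmul_eq_mul, ← Finset.sum_const]
    refine Finset.sum_le_sum fun A hA => ?_
    have hAr : r ≤ (A.card : ℝ) := (Finset.mem_filter.mp hA).2
    rw [← Real.exp_nat_mul]
    apply Real.exp_le_exp.mpr
    have := mul_le_mul_of_nonneg_left hAr hlam
    nlinarith
  have h := hcard.trans hsum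
  calc ((s.card : ℝ)) = (s.card : ℝ) * Real.exp (lam * r) * Real.exp (-(lam * r)) := by
        rw [mul_assoc, ← Real.exp_add]; simp
    _ ≤ (Real.exp lam + 1) ^ K.card * Real.exp (-(lam * r)) :=
        mul_le_mul_of_nonneg_right h (Real.exp_pos _).le
    _ = Real.exp (-(lam * r)) * (Real.exp lam + 1) ^ K.card := mul_comm _ _

private lemma exp_add_one_le (t : ℝ) :
    Real.exp t + 1 ≤ 2 * Real.exp (t / 2 + t ^ 2 / 8) := by
  have h1 : 2 * Real.exp (t / 2) * Real.cosh (t / 2) = Real.exp t + 1 := by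
    rw [Real.cosh_eq]
    calc 2 * Real.exp (t / 2) * ((Real.exp (t / 2) + Real.exp (-(t / 2))) / 2)
        = Real.exp (t / 2) * Real.exp (t / 2) + Real.exp (t / 2) * Real.exp (-(t / 2)) := by
          ring
      _ = Real.exp t + 1 := by
          rw [← Real.exp_add, ← Real.exp_add, show t / 2 + t / 2 = t by ring]
          simp
  rw [← h1]
  have hcosh := Real.cosh_le_exp_half_sq (t / 2)
  calc 2 * Real.exp (t / 2) * Real.cosh (t / 2)
      ≤ 2 * Real.exp (t / 2) * Real.exp ((t / 2) ^ 2 / 2) := by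
        have h2 : (0 : ℝ) ≤ 2 * Real.exp (t / 2) := by positivity
        exact mul_le_mul_of_nonneg_left hcosh h2
    _ = 2 * Real.exp (t / 2 + t ^ 2 / 8) := by
        rw [mul_assoc, ← Real.exp_add, show t / 2 + (t / 2) ^ 2 / 2 = t / 2 + t ^ 2 / 8 by ring]

/-- Hoeffding-type tail bound for the number of subsets whose size deviates from
half of the ground set size. -/
private lemma count_tails {ι : Type*} (K : Finset ι) (δ : ℝ) (hδ : 0 ≤ δ) :
    (((K.powerset.filter (fun A => (A.card : ℝ) ≤ (1 / 2 - δ) * K.card ∨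
        (1 / 2 + δ) * K.card ≤ (A.card : ℝ))).card : ℝ))
      ≤ 2 * (2 ^ K.card * Real.exp (-(2 * δ ^ 2) * K.card)) := by
  classical
  have hbase_low : Real.exp (-(4 * δ)) + 1 ≤ 2 * Real.exp (-(2 * δ) + 2 * δ ^ 2) := by
    have h := exp_add_one_le (-(4 * δ))
    rwa [show -(4 * δ) / 2 + (-(4 * δ)) ^ 2 / 8 = -(2 * δ) + 2 * δ ^ 2 by ring] at h
  have hbase_high : Real.exp (4 * δ) + 1 ≤ 2 * Real.exp (2 * δ + 2 * δ ^ 2) := by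
    have h := exp_add_one_le (4 * δ)
    rwa [show 4 * δ / 2 + (4 * δ) ^ 2 / 8 = 2 * δ + 2 * δ ^ 2 by ring] at h
  have hlam : (0 : ℝ) ≤ 4 * δ := by linarith
  have hlow : (((K.powerset.filter
        (fun A => (A.card : ℝ) ≤ (1 / 2 - δ) * K.card)).card : ℝ))
      ≤ 2 ^ K.card * Real.exp (-(2 * δ ^ 2) * K.card) := by
    calc (((K.powerset.filter (fun A => (A.card : ℝ) ≤ (1 / 2 - δ) * K.card)).card : ℝ))
        ≤ Real.exp (4 * δ * ((1 / 2 - δ) * K.card)) * (Real.exp (-(4 * δ)) + 1) ^ K.card :=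
          tail_card_low K _ _ hlam
      _ ≤ Real.exp (4 * δ * ((1 / 2 - δ) * K.card)) *
            (2 * Real.exp (-(2 * δ) + 2 * δ ^ 2)) ^ K.card := by
          apply mul_le_mul_of_nonneg_left _ (Real.exp_pos _).le
          exact pow_le_pow_left₀ (by positivity) hbase_low K.card
      _ = 2 ^ K.card * Real.exp (-(2 * δ ^ 2) * K.card) := by
          rw [mul_pow, ← Real.exp_nat_mul, ← mul_assoc,
            mul_comm (Real.exp _) ((2:ℝ) ^ K.card), mul_assoc, ← Real.exp_add]
          congr 1
          ring
  have hhigh : (((K.powerset.filter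
        (fun A => (1 / 2 + δ) * K.card ≤ (A.card : ℝ))).card : ℝ))
      ≤ 2 ^ K.card * Real.exp (-(2 * δ ^ 2) * K.card) := by
    calc (((K.powerset.filter (fun A => (1 / 2 + δ) * K.card ≤ (A.card : ℝ))).card : ℝ))
        ≤ Real.exp (-(4 * δ * ((1 / 2 + δ) * K.card))) * (Real.exp (4 * δ) + 1) ^ K.card :=
          tail_card_high K _ _ hlam
      _ ≤ Real.exp (-(4 * δ * ((1 / 2 + δ) * K.card))) *
            (2 * Real.exp (2 * δ + 2 * δ ^ 2)) ^ K.card := by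
          apply mul_le_mul_of_nonneg_left _ (Real.exp_pos _).le
          exact pow_le_pow_left₀ (by positivity) hbase_high K.card
      _ = 2 ^ K.card * Real.exp (-(2 * δ ^ 2) * K.card) := by
          rw [mul_pow, ← Real.exp_nat_mul, ← mul_assoc,
            mul_comm (Real.exp _) ((2:ℝ) ^ K.card), mul_assoc, ← Real.exp_add]
          congr 1
          ring
  calc (((K.powerset.filter (fun A => (A.card : ℝ) ≤ (1 / 2 - δ) * K.card ∨
        (1 / 2 + δ) * K.card ≤ (A.card : ℝ))).card : ℝ))
      ≤ (((K.powerset.filter (fun A => (A.card : ℝ) ≤ (1 / 2 - δ) * K.card)).card : ℝ))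
        + (((K.powerset.filter (fun A => (1 / 2 + δ) * K.card ≤ (A.card : ℝ))).card : ℝ)) := by
        rw [Finset.filter_or]
        exact_mod_cast Finset.card_union_le _ _
    _ ≤ 2 * (2 ^ K.card * Real.exp (-(2 * δ ^ 2) * K.card)) := by linarith

private lemma edgeCount_eq_card_edgeFinset {N : ℕ} (G : SimpleGraph (Fin N)) :
    edgeCount G = G.edgeFinset.card := by
  simp [edgeCount, SimpleGraph.edgeFinset, Set.ncard_eq_toFinset_card']

/-- The "star" graph on `Fin (n+1)` : `0` is adjacent to every other vertex. -/
private def starG (n : ℕ) : SimpleGraph (Fin (n + 1)) :=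
  SimpleGraph.fromRel (fun i _ => i = 0)

private lemma starG_connected (n : ℕ) : (starG n).Connected := by
  rw [SimpleGraph.connected_iff]
  refine ⟨fun u v => ?_, ⟨0⟩⟩
  have key : ∀ w : Fin (n + 1), (starG n).Reachable 0 w := by
    intro w
    by_cases hw : w = 0
    · rw [hw]
    · refine SimpleGraph.Adj.reachable ?_
      rw [starG, SimpleGraph.fromRel_adj]
      exact ⟨fun h => hw h.symm, Or.inl rfl⟩
  exact (key u).symm.trans (key v)

/-- Lower bound on the number of connected graphs: at least `2 ^ (n.choose 2)` of them on
`n + 1` vertices (graphs containing the full star at `0`). -/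
private lemma card_conn_lower (n : ℕ) :
    2 ^ n.choose 2 ≤ Fintype.card (ConnGraph (n + 1)) := by
  classical
  set f : Fin n ↪ Fin (n + 1) := ⟨Fin.succ, Fin.succ_injective n⟩ with hf
  have hconn : ∀ H : SimpleGraph (Fin n), (SimpleGraph.map f H ⊔ starG n).Connected :=
    fun H => (starG_connected n).mono le_sup_right
  set ψ : SimpleGraph (Fin n) → ConnGraph (n + 1) :=
    fun H => ⟨SimpleGraph.map f H ⊔ starG n, hconn H⟩ with hψdef
  have key : ∀ (H : SimpleGraph (Fin n)) (a b : Fin n),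
      (SimpleGraph.map f H ⊔ starG n).Adj a.succ b.succ ↔ H.Adj a b := by
    intro H a b
    simp only [SimpleGraph.sup_adj, SimpleGraph.map_adj, starG, SimpleGraph.fromRel_adj, hf]
    constructor
    · rintro (⟨a', b', hab, ha, hb⟩ | ⟨_, (h0 | h0)⟩)
      · have ha' : a' = a := Fin.succ_injective n ha
        have hb' : b' = b := Fin.succ_injective n hb
        rwa [ha', hb'] at hab
      · exact absurd h0 (Fin.succ_ne_zero a)
      · exact absurd h0 (Fin.succ_ne_zero b)
    · intro h
      exact Or.inl ⟨a, b, h, rfl, rfl⟩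
  have hψ : Function.Injective ψ := by
    intro H1 H2 h
    have h' : SimpleGraph.map f H1 ⊔ starG n = SimpleGraph.map f H2 ⊔ starG n :=
      congrArg Subtype.val h
    ext a b
    rw [← key H1 a b, h', key H2 a b]
  set K' := (⊤ : SimpleGraph (Fin n)).edgeFinset with hK'
  have hKcard : K'.card = n.choose 2 := by
    rw [hK', SimpleGraph.card_edgeFinset_top_eq_card_choose_two, Fintype.card_fin]
  have hfrom : ∀ A ∈ K'.powerset, (SimpleGraph.fromEdgeSet (A : Set (Sym2 (Fin n)))).edgeSet
      = (A : Set (Sym2 (Fin n))) := by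
    intro A hA
    rw [SimpleGraph.edgeSet_fromEdgeSet, sdiff_eq_left]
    apply Set.disjoint_left.mpr
    intro e heA hediag
    have hmem : e ∈ (⊤ : SimpleGraph (Fin n)).edgeSet := by
      have h := Finset.mem_powerset.mp hA heA
      rwa [hK', SimpleGraph.mem_edgeFinset] at h
    exact SimpleGraph.not_isDiag_of_mem_edgeSet _ hmem hediag
  have hcard : K'.powerset.card ≤ Fintype.card (ConnGraph (n + 1)) := by
    rw [← Finset.card_univ]
    refine Finset.card_le_card_of_injOn
      (fun A => ψ (SimpleGraph.fromEdgeSet (A : Set (Sym2 (Fin n)))))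
      (fun A _ => Finset.mem_univ _) ?_
    intro A hA B hB h
    have h2 : SimpleGraph.fromEdgeSet (A : Set (Sym2 (Fin n)))
        = SimpleGraph.fromEdgeSet (B : Set (Sym2 (Fin n))) := hψ h
    have h3 : (A : Set (Sym2 (Fin n))) = (B : Set (Sym2 (Fin n))) := by
      rw [← hfrom A hA, ← hfrom B hB, h2]
    exact_mod_cast h3
  rwa [Finset.card_powerset, hKcard] at hcard

private lemma card_conn_lower' (N : ℕ) (hN : 1 ≤ N) :
    2 ^ N.choose 2 ≤ Fintype.card (ConnGraph N) * 2 ^ (N - 1) := by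
  obtain ⟨m, rfl⟩ : ∃ m, N = m + 1 := ⟨N - 1, by omega⟩
  have h := card_conn_lower m
  have hch : (m + 1).choose 2 = m.choose 2 + m := by
    rw [Nat.choose_succ_succ, Nat.choose_one_right, Nat.add_comm]
  rw [hch, pow_add, show m + 1 - 1 = m from rfl]
  exact Nat.mul_le_mul_right _ h

/-- The eventual smallness of the error term. -/
private lemma eventually_small (α : ℝ) (hα2 : α < 2) (δ : ℝ) (hδ : 0 < δ) :
    ∃ N₁ : ℕ, ∀ N : ℕ, N₁ ≤ N →
      Real.exp ((N : ℝ) ^ α + N * Real.log 2 + Real.log 2 + δ ^ 2 * N - δ ^ 2 * N ^ 2) ≤ δ := by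
  have hbr : Filter.Tendsto
      (fun x : ℝ => x ^ (α - 2) + (Real.log 2 * x⁻¹ + (Real.log 2 * (x⁻¹ * x⁻¹)
        + (δ ^ 2 * x⁻¹ - δ ^ 2)))) Filter.atTop (nhds (-δ ^ 2)) := by
    have h1 : Filter.Tendsto (fun x : ℝ => x ^ (α - 2)) Filter.atTop (nhds 0) := by
      have h := tendsto_rpow_neg_atTop (y := 2 - α) (by linarith)
      simpa [show -(2 - α) = α - 2 by ring] using h
    have h2 : Filter.Tendsto (fun x : ℝ => x⁻¹) Filter.atTop (nhds (0:ℝ)) :=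
      tendsto_inv_atTop_zero
    have h := h1.add (((h2.const_mul (Real.log 2))).add
      (((h2.mul h2).const_mul (Real.log 2)).add ((h2.const_mul (δ ^ 2)).sub_const (δ ^ 2))))
    simpa using h
  have hx2 : Filter.Tendsto (fun x : ℝ => x ^ 2) Filter.atTop Filter.atTop :=
    Filter.tendsto_pow_atTop two_ne_zero
  have hmul := hx2.atTop_mul_neg (neg_lt_zero.mpr (by positivity : (0:ℝ) < δ ^ 2)) hbr
  have hu : Filter.Tendsto
      (fun x : ℝ => x ^ α + x * Real.log 2 + Real.log 2 + δ ^ 2 * x - δ ^ 2 * x ^ 2)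
      Filter.atTop Filter.atBot := by
    refine hmul.congr' ?_
    filter_upwards [Filter.eventually_ge_atTop (1:ℝ)] with x hx
    have hx0 : (0:ℝ) < x := lt_of_lt_of_le one_pos hx
    have hxne : x ≠ 0 := ne_of_gt hx0
    have e1 : x ^ (2:ℕ) * x ^ (α - 2) = x ^ α := by
      rw [← Real.rpow_natCast x 2, ← Real.rpow_add hx0]
      norm_num
    rw [mul_add, e1]
    field_simp
    try ring
  have hexp : Filter.Tendsto (fun N : ℕ =>
      Real.exp ((N : ℝ) ^ α + N * Real.log 2 + Real.log 2 + δ ^ 2 * N - δ ^ 2 * N ^ 2))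
      Filter.atTop (nhds 0) :=
    (Real.tendsto_exp_atBot.comp hu).comp tendsto_natCast_atTop_atTop
  have hev := hexp.eventually_lt_const hδ
  rw [Filter.eventually_atTop] at hev
  obtain ⟨N₁, hN₁⟩ := hev
  exact ⟨N₁, fun N hN => (hN₁ N hN).le⟩

/-- For `0 < α < 2`, `ε > 0`, and all large `N`, any everywhere-positive probability
distribution `π` on labeled connected graphs on `N` vertices with `π(G) < exp(N^α)·π(H)`
for all pairs has expected number of edges within `ε·(N choose 2)` of `(1/2)(N choose 2)`. -/
theorem expected_edge_count (α : ℝ) (hα0 : 0 < α) (hα2 : α < 2) (ε : ℝ) (hε : 0 < ε) :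
    ∃ N₀ : ℕ, ∀ N : ℕ, N₀ ≤ N →
      ∀ π : ConnGraph N → ℝ, (∀ G, 0 < π G) → (∑ G : ConnGraph N, π G = 1) →
        (∀ G H : ConnGraph N, π G < Real.exp ((N : ℝ) ^ α) * π H) →
        |(∑ G : ConnGraph N, π G * (edgeCount G.1 : ℝ)) -
            (1 / 2) * (N.choose 2 : ℝ)| ≤ ε * (N.choose 2 : ℝ) := by
  set δ : ℝ := min (ε / 2) (1 / 2) with hδdef
  have hδ0 : 0 < δ := lt_min (by linarith) (by norm_num)
  have hδε : 2 * δ ≤ ε := by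
    have h := min_le_left (ε / 2) (1 / 2)
    rw [hδdef]
    linarith
  obtain ⟨N₁, hN₁⟩ := eventually_small α hα2 δ hδ0
  refine ⟨max N₁ 2, fun N hN π hπpos hπsum hπratio => ?_⟩
  have hN2 : 2 ≤ N := le_trans (le_max_right _ _) hN
  have hNN₁ : N₁ ≤ N := le_trans (le_max_left _ _) hN
  set c : ℝ := (N.choose 2 : ℝ) with hc
  have hc0 : (0:ℝ) ≤ c := Nat.cast_nonneg _
  -- the number of connected graphs
  have hcardlow := card_conn_lower' N (by omega)
  have hcardpos : 0 < Fintype.card (ConnGraph N) := by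
    rcases Nat.eq_zero_or_pos (Fintype.card (ConnGraph N)) with h | h
    · rw [h] at hcardlow
      simp at hcardlow
    · exact h
  have hcardposR : (0:ℝ) < (Fintype.card (ConnGraph N) : ℝ) := by exact_mod_cast hcardpos
  have huniv : (Finset.univ : Finset (ConnGraph N)).Nonempty :=
    Finset.univ_nonempty_iff.mpr (Fintype.card_pos_iff.mp hcardpos)
  -- pointwise upper bound on π
  have hπle : ∀ G : ConnGraph N,
      π G ≤ Real.exp ((N : ℝ) ^ α) / (Fintype.card (ConnGraph N) : ℝ) := by
    intro G
    have hsum := Finset.sum_lt_sum_of_nonempty huniv (fun H _ => hπratio G H)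
    rw [Finset.sum_const, ← Finset.mul_sum, hπsum, mul_one, nsmul_eq_mul,
      Finset.card_univ] at hsum
    rw [le_div_iff₀ hcardposR]
    linarith [hsum]
  -- the edge finset of the complete graph
  set K := (⊤ : SimpleGraph (Fin N)).edgeFinset with hK
  have hKcard : K.card = N.choose 2 := by
    rw [hK, SimpleGraph.card_edgeFinset_top_eq_card_choose_two, Fintype.card_fin]
  have hmle : ∀ G : ConnGraph N, edgeCount G.1 ≤ N.choose 2 := by
    intro G
    rw [edgeCount_eq_card_edgeFinset, ← hKcard]
    exact Finset.card_le_card (SimpleGraph.edgeFinset_mono le_top)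
  -- the bad set
  set bad := Finset.univ.filter
    (fun G : ConnGraph N => δ * c < |(edgeCount G.1 : ℝ) - c / 2|) with hbad
  have hbadcount : (bad.card : ℝ) ≤ 2 * (2 ^ N.choose 2 * Real.exp (-(2 * δ ^ 2) * c)) := by
    have hmap : ∀ G ∈ bad, G.1.edgeFinset ∈ K.powerset.filter
        (fun A => (A.card : ℝ) ≤ (1 / 2 - δ) * K.card ∨
          (1 / 2 + δ) * K.card ≤ (A.card : ℝ)) := by
      intro G hG
      have hGbad : δ * c < |(edgeCount G.1 : ℝ) - c / 2| := (Finset.mem_filter.mp hG).2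
      rw [Finset.mem_filter, Finset.mem_powerset]
      refine ⟨SimpleGraph.edgeFinset_mono le_top, ?_⟩
      have hcardA : (G.1.edgeFinset.card : ℝ) = (edgeCount G.1 : ℝ) := by
        rw [edgeCount_eq_card_edgeFinset]
      have hKc : (K.card : ℝ) = c := by rw [hKcard]
      rw [hcardA, hKc]
      rcases lt_abs.mp hGbad with h | h
      · right; linarith
      · left; linarith
    have hinj : Set.InjOn (fun G : ConnGraph N => G.1.edgeFinset) bad := by
      intro G _ H _ h
      exact Subtype.ext (SimpleGraph.edgeFinset_inj.mp h)
    have h := Finset.card_le_card_of_injOn _ hmap hinj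
    calc (bad.card : ℝ)
        ≤ ((K.powerset.filter (fun A => (A.card : ℝ) ≤ (1 / 2 - δ) * K.card ∨
            (1 / 2 + δ) * K.card ≤ (A.card : ℝ))).card : ℝ) := by exact_mod_cast h
      _ ≤ 2 * (2 ^ K.card * Real.exp (-(2 * δ ^ 2) * K.card)) := count_tails K δ hδ0.le
      _ = 2 * (2 ^ N.choose 2 * Real.exp (-(2 * δ ^ 2) * c)) := by rw [hKcard, hc]
  -- total bad probability is at most δ
  have hπbad : ∑ G ∈ bad, π G ≤ δ := by
    have h1 : ∑ G ∈ bad, π G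
        ≤ bad.card • (Real.exp ((N : ℝ) ^ α) / (Fintype.card (ConnGraph N) : ℝ)) :=
      Finset.sum_le_card_nsmul _ _ _ (fun G _ => hπle G)
    rw [nsmul_eq_mul] at h1
    set E := Real.exp ((N : ℝ) ^ α) with hE
    have hE0 : (0:ℝ) ≤ E := Real.exp_pos _ |>.le
    have hcardR : (2:ℝ) ^ N.choose 2 ≤ (Fintype.card (ConnGraph N) : ℝ) * 2 ^ (N - 1) := by
      exact_mod_cast hcardlow
    have hstep : E / (Fintype.card (ConnGraph N) : ℝ)
        ≤ E * 2 ^ (N - 1) / 2 ^ N.choose 2 := by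
      rw [div_le_div_iff₀ hcardposR (by positivity)]
      calc E * 2 ^ N.choose 2 ≤ E * ((Fintype.card (ConnGraph N) : ℝ) * 2 ^ (N - 1)) :=
            mul_le_mul_of_nonneg_left hcardR hE0
        _ = E * 2 ^ (N - 1) * (Fintype.card (ConnGraph N) : ℝ) := by ring
    have h2 : ∑ G ∈ bad, π G
        ≤ (2 * (2 ^ N.choose 2 * Real.exp (-(2 * δ ^ 2) * c)))
            * (E * 2 ^ (N - 1) / 2 ^ N.choose 2) := by
      calc ∑ G ∈ bad, π G ≤ (bad.card : ℝ) * (E / (Fintype.card (ConnGraph N) : ℝ)) := h1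
        _ ≤ (2 * (2 ^ N.choose 2 * Real.exp (-(2 * δ ^ 2) * c)))
            * (E * 2 ^ (N - 1) / 2 ^ N.choose 2) := by
          apply mul_le_mul hbadcount hstep (by positivity) (by positivity)
    have hpow : ((2:ℝ) ^ N.choose 2) ≠ 0 := by positivity
    have h3 : (2 * (2 ^ N.choose 2 * Real.exp (-(2 * δ ^ 2) * c)))
        * (E * 2 ^ (N - 1) / 2 ^ N.choose 2)
        = 2 * 2 ^ (N - 1) * (Real.exp (-(2 * δ ^ 2) * c) * E) := by
      field_simp
    -- rewrite everything as a single exponential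
    have h4 : 2 * (2:ℝ) ^ (N - 1) * (Real.exp (-(2 * δ ^ 2) * c) * E)
        = Real.exp (Real.log 2 + (N - 1 : ℕ) * Real.log 2 + (-(2 * δ ^ 2) * c + (N:ℝ) ^ α)) := by
      rw [Real.exp_add, Real.exp_add, Real.exp_nat_mul, Real.exp_log two_pos, Real.exp_add, hE]
    have h5 : Real.log 2 + ((N - 1 : ℕ) : ℝ) * Real.log 2 + (-(2 * δ ^ 2) * c + (N:ℝ) ^ α)
        ≤ (N : ℝ) ^ α + N * Real.log 2 + Real.log 2 + δ ^ 2 * N - δ ^ 2 * N ^ 2 := by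
      have hlog2 : (0:ℝ) ≤ Real.log 2 := Real.log_nonneg one_le_two
      have hNm : ((N - 1 : ℕ) : ℝ) ≤ (N : ℝ) := by
        exact_mod_cast Nat.sub_le N 1
      have hcval : c = (N : ℝ) * ((N : ℝ) - 1) / 2 := by
        rw [hc, Nat.cast_choose_two]
      rw [hcval]
      nlinarith [mul_le_mul_of_nonneg_right hNm hlog2]
    calc ∑ G ∈ bad, π G
        ≤ 2 * 2 ^ (N - 1) * (Real.exp (-(2 * δ ^ 2) * c) * E) := by rw [← h3]; exact h2
      _ = Real.exp (Real.log 2 + (N - 1 : ℕ) * Real.log 2 + (-(2 * δ ^ 2) * c + (N:ℝ) ^ α)) :=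
          h4
      _ ≤ Real.exp ((N : ℝ) ^ α + N * Real.log 2 + Real.log 2 + δ ^ 2 * N - δ ^ 2 * N ^ 2) :=
          Real.exp_le_exp.mpr h5
      _ ≤ δ := hN₁ N hNN₁
  -- assemble
  have habs : ∀ G : ConnGraph N, |(edgeCount G.1 : ℝ) - c / 2| ≤ c := by
    intro G
    have h1 : (edgeCount G.1 : ℝ) ≤ c := by
      rw [hc]; exact_mod_cast hmle G
    have h2 : (0:ℝ) ≤ (edgeCount G.1 : ℝ) := Nat.cast_nonneg _
    rw [abs_le]
    constructor <;> linarith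
  have hsplit : (∑ G : ConnGraph N, π G * (edgeCount G.1 : ℝ)) - (1 / 2) * c
      = ∑ G : ConnGraph N, π G * ((edgeCount G.1 : ℝ) - c / 2) := by
    simp only [mul_sub]
    rw [Finset.sum_sub_distrib, ← Finset.sum_mul, hπsum]
    ring
  set good := Finset.univ.filter
    (fun G : ConnGraph N => ¬ (δ * c < |(edgeCount G.1 : ℝ) - c / 2|)) with hgood
  have hbadpart : ∑ G ∈ bad, π G * |(edgeCount G.1 : ℝ) - c / 2| ≤ δ * c := by
    calc ∑ G ∈ bad, π G * |(edgeCount G.1 : ℝ) - c / 2|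
        ≤ ∑ G ∈ bad, π G * c := by
          refine Finset.sum_le_sum fun G _ => ?_
          exact mul_le_mul_of_nonneg_left (habs G) (hπpos G).le
      _ = (∑ G ∈ bad, π G) * c := by rw [Finset.sum_mul]
      _ ≤ δ * c := mul_le_mul_of_nonneg_right hπbad hc0
  have hgoodpart : ∑ G ∈ good, π G * |(edgeCount G.1 : ℝ) - c / 2| ≤ δ * c := by
    calc ∑ G ∈ good, π G * |(edgeCount G.1 : ℝ) - c / 2|
        ≤ ∑ G ∈ good, π G * (δ * c) := by
          refine Finset.sum_le_sum fun G hG => ?_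
          have h := (Finset.mem_filter.mp hG).2
          push_neg at h
          exact mul_le_mul_of_nonneg_left h (hπpos G).le
      _ = (∑ G ∈ good, π G) * (δ * c) := by rw [Finset.sum_mul]
      _ ≤ 1 * (δ * c) := by
          apply mul_le_mul_of_nonneg_right _ (by positivity)
          rw [← hπsum]
          exact Finset.sum_le_sum_of_subset_of_nonneg (Finset.filter_subset _ _)
            (fun G _ _ => (hπpos G).le)
      _ = δ * c := one_mul _
  rw [hsplit]
  calc |∑ G : ConnGraph N, π G * ((edgeCount G.1 : ℝ) - c / 2)|
      ≤ ∑ G : ConnGraph N, |π G * ((edgeCount G.1 : ℝ) - c / 2)| :=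
        Finset.abs_sum_le_sum_abs _ _
    _ = ∑ G : ConnGraph N, π G * |(edgeCount G.1 : ℝ) - c / 2| := by
        refine Finset.sum_congr rfl fun G _ => ?_
        rw [abs_mul, abs_of_pos (hπpos G)]
    _ = (∑ G ∈ bad, π G * |(edgeCount G.1 : ℝ) - c / 2|)
        + ∑ G ∈ good, π G * |(edgeCount G.1 : ℝ) - c / 2| := by
        rw [hbad, hgood]
        exact (Finset.sum_filter_add_sum_filter_not _ _ _).symm
    _ ≤ δ * c + δ * c := add_le_add hbadpart hgoodpart
    _ ≤ ε * c := by
        have h := mul_le_mul_of_nonneg_right hδε hc0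
        linarith
end

section
/- For every ε > 0 there exists N₀ such that for all N ≥ N₀, the degree-proportional distribution π_N on the triangle-move graph 𝒢_N satisfies |Σ_G π_N(G)·|E(G)| − (1/2)·(N choose 2)| ≤ ε · (N choose 2), where the sum ranges over all labeled connected graphs G on N vertices and |E(G)| is the number of edges of G. -/
open scoped Classical

/-! ### Auxiliary material -/

open Finset

section Chernoff

/-- Generating-function identity for subset sums. -/
lemma aux_sum_pow_card {α : Type*} [DecidableEq α] (T : Finset α) (x : ℝ) :
    ∑ s ∈ T.powerset, x ^ s.card = (x + 1) ^ T.card := by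
  rw [← Finset.prod_const, Finset.prod_add]
  exact Finset.sum_congr rfl fun t ht => by simp

lemma aux_exp_sum {α : Type*} [DecidableEq α] (T : Finset α) (lam : ℝ) :
    (∑ s ∈ T.powerset, Real.exp (lam * (2 * (s.card : ℝ) - T.card)))
      = (Real.exp lam + Real.exp (-lam)) ^ T.card := by
  have : ∀ s ∈ T.powerset, Real.exp (lam * (2 * (s.card : ℝ) - T.card))
      = Real.exp (2 * lam) ^ s.card * Real.exp (-lam) ^ T.card := by
    intro s _
    rw [← Real.exp_nat_mul, ← Real.exp_nat_mul, ← Real.exp_add]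
    ring_nf
  rw [Finset.sum_congr rfl this, ← Finset.sum_mul, aux_sum_pow_card, ← mul_pow]
  congr 1
  rw [add_mul, ← Real.exp_add, one_mul]
  ring_nf

/-- Chernoff-type bound for the number of subsets whose size deviates from half. -/
lemma aux_tail_bound {α : Type*} [DecidableEq α] (T : Finset α) (lam r : ℝ)
    (h0 : 0 < lam) (h1 : lam ≤ 1) (hr : 0 ≤ r) :
    (((T.powerset.filter (fun s => r ≤ |2 * (s.card : ℝ) - T.card|)).card : ℝ))
      ≤ 2 * (2 ^ T.card * Real.exp (lam ^ 2 * T.card)) * Real.exp (-(lam * r)) := by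
  set M := T.card
  have hA : (Real.exp lam + Real.exp (-lam)) ^ M ≤ 2 ^ M * Real.exp (lam ^ 2 * M) := by
    have hb : Real.exp lam + Real.exp (-lam) ≤ 2 * Real.exp (lam ^ 2) := by
      have h2 : Real.exp lam + Real.exp (-lam) ≤ 2 + 2 * lam ^ 2 := by
        have hx : |lam| ≤ 1 := by rw [abs_of_pos h0]; exact h1
        have hb1 := Real.exp_bound hx (n := 2) (by norm_num)
        have hb2 := Real.exp_bound (x := -lam) (by rwa [abs_neg]) (n := 2) (by norm_num)
        rw [abs_sub_le_iff] at hb1 hb2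
        have e1 := hb1.1
        have e2 := hb2.1
        simp [Finset.sum_range_succ] at e1 e2
        nlinarith [sq_abs lam]
      have := Real.add_one_le_exp (lam ^ 2)
      nlinarith [Real.exp_pos (lam ^ 2)]
    calc (Real.exp lam + Real.exp (-lam)) ^ M ≤ (2 * Real.exp (lam ^ 2)) ^ M := by
          apply pow_le_pow_left₀ (by positivity) hb
      _ = 2 ^ M * Real.exp (lam ^ 2 * M) := by
          rw [mul_pow, ← Real.exp_nat_mul]; ring_nf
  have key : ∀ (sgn : ℝ), sgn = 1 ∨ sgn = -1 →
      (((T.powerset.filter (fun s => r ≤ sgn * (2 * (s.card : ℝ) - T.card))).card : ℝ))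
        * Real.exp (lam * r) ≤ (Real.exp lam + Real.exp (-lam)) ^ M := by
    intro sgn hsgn
    have hle : ∀ s ∈ T.powerset.filter (fun s => r ≤ sgn * (2 * (s.card : ℝ) - T.card)),
        Real.exp (lam * r) ≤ Real.exp (lam * (sgn * (2 * (s.card : ℝ) - T.card))) := by
      intro s hs
      rw [Finset.mem_filter] at hs
      exact Real.exp_le_exp.2 (by nlinarith [hs.2])
    calc (((T.powerset.filter (fun s => r ≤ sgn * (2 * (s.card : ℝ) - T.card))).card : ℝ))
          * Real.exp (lam * r)
        = ∑ _s ∈ T.powerset.filter (fun s => r ≤ sgn * (2 * (s.card : ℝ) - T.card)),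
            Real.exp (lam * r) := by rw [Finset.sum_const, nsmul_eq_mul]
      _ ≤ ∑ s ∈ T.powerset.filter (fun s => r ≤ sgn * (2 * (s.card : ℝ) - T.card)),
            Real.exp (lam * (sgn * (2 * (s.card : ℝ) - T.card))) := Finset.sum_le_sum hle
      _ ≤ ∑ s ∈ T.powerset, Real.exp (lam * (sgn * (2 * (s.card : ℝ) - T.card))) :=
            Finset.sum_le_sum_of_subset_of_nonneg (Finset.filter_subset _ _)
              (fun _ _ _ => (Real.exp_pos _).le)
      _ ≤ (Real.exp lam + Real.exp (-lam)) ^ M := by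
            rcases hsgn with h | h
            · subst h
              simp only [one_mul]
              exact le_of_eq (aux_exp_sum T lam)
            · subst h
              have : ∀ s ∈ T.powerset, Real.exp (lam * (-1 * (2 * (s.card : ℝ) - T.card)))
                  = Real.exp ((-lam) * (2 * (s.card : ℝ) - T.card)) := by
                intro s _; ring_nf
              rw [Finset.sum_congr rfl this, aux_exp_sum T (-lam)]
              simp [add_comm]
              exact le_rfl
  have hsplit : (T.powerset.filter (fun s => r ≤ |2 * (s.card : ℝ) - T.card|))
      ⊆ (T.powerset.filter (fun s => r ≤ 1 * (2 * (s.card : ℝ) - T.card)))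
        ∪ (T.powerset.filter (fun s => r ≤ -1 * (2 * (s.card : ℝ) - T.card))) := by
    intro s hs
    rw [Finset.mem_filter] at hs
    rcases abs_cases (2 * (s.card : ℝ) - T.card) with ⟨h, _⟩ | ⟨h, _⟩
    · exact Finset.mem_union_left _ (Finset.mem_filter.2 ⟨hs.1, by rw [one_mul, ← h]; exact hs.2⟩)
    · exact Finset.mem_union_right _
        (Finset.mem_filter.2 ⟨hs.1, by rw [neg_one_mul, ← h]; exact hs.2⟩)
  have hcard : ((T.powerset.filter (fun s => r ≤ |2 * (s.card : ℝ) - T.card|)).card : ℝ)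
      ≤ ((T.powerset.filter (fun s => r ≤ 1 * (2 * (s.card : ℝ) - T.card))).card : ℝ)
        + ((T.powerset.filter (fun s => r ≤ -1 * (2 * (s.card : ℝ) - T.card))).card : ℝ) := by
    have := (Finset.card_le_card hsplit).trans (Finset.card_union_le _ _)
    exact_mod_cast this
  have h1' := key 1 (Or.inl rfl)
  have h2' := key (-1) (Or.inr rfl)
  have final : ((T.powerset.filter (fun s => r ≤ |2 * (s.card : ℝ) - T.card|)).card : ℝ)
      ≤ 2 * ((Real.exp lam + Real.exp (-lam)) ^ M) * Real.exp (-(lam * r)) := by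
    have hfin : ((T.powerset.filter (fun s => r ≤ |2 * (s.card : ℝ) - T.card|)).card : ℝ)
        * Real.exp (lam * r) ≤ 2 * ((Real.exp lam + Real.exp (-lam)) ^ M) := by
      calc ((T.powerset.filter (fun s => r ≤ |2 * (s.card : ℝ) - T.card|)).card : ℝ)
            * Real.exp (lam * r)
          ≤ (((T.powerset.filter (fun s => r ≤ 1 * (2 * (s.card : ℝ) - T.card))).card : ℝ)
              + ((T.powerset.filter (fun s => r ≤ -1 * (2 * (s.card : ℝ) - T.card))).card : ℝ))
              * Real.exp (lam * r) := by
            apply mul_le_mul_of_nonneg_right hcard (Real.exp_pos _).le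
        _ ≤ 2 * (Real.exp lam + Real.exp (-lam)) ^ M := by
            rw [add_mul]; nlinarith [h1', h2']
    have h2 := mul_le_mul_of_nonneg_right hfin (Real.exp_pos (-(lam * r))).le
    rw [mul_assoc, ← Real.exp_add, add_neg_cancel, Real.exp_zero, mul_one] at h2
    exact h2
  refine final.trans ?_
  apply mul_le_mul_of_nonneg_right _ (Real.exp_pos _).le
  nlinarith [hA]

end Chernoff

section Graphs

/-- The finset of all potential edges on `Fin N`. -/
noncomputable def TE (N : ℕ) : Finset (Sym2 (Fin N)) := (⊤ : SimpleGraph (Fin N)).edgeFinset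

variable {N : ℕ}

lemma mem_TE {e : Sym2 (Fin N)} : e ∈ TE N ↔ ¬ e.IsDiag := by
  simp [TE, SimpleGraph.mem_edgeFinset, SimpleGraph.edgeSet_top]

lemma TE_card : (TE N).card = N.choose 2 := by
  rw [TE, SimpleGraph.card_edgeFinset_top_eq_card_choose_two, Fintype.card_fin]

lemma edgeFinset_subset_TE (G : SimpleGraph (Fin N)) : G.edgeFinset ⊆ TE N :=
  SimpleGraph.edgeFinset_mono le_top

lemma edgeFinset_fromEdgeSet {s : Finset (Sym2 (Fin N))} (hs : s ⊆ TE N) :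
    (SimpleGraph.fromEdgeSet ↑s).edgeFinset = s := by
  ext e
  simp only [SimpleGraph.mem_edgeFinset, SimpleGraph.edgeSet_fromEdgeSet, Set.mem_diff,
    Finset.mem_coe, Set.mem_setOf_eq]
  exact ⟨fun h => h.1, fun h => ⟨h, mem_TE.1 (hs h)⟩⟩

lemma edgeCount_eq (G : SimpleGraph (Fin N)) : edgeCount G = G.edgeFinset.card := by
  rw [edgeCount, Set.ncard_eq_toFinset_card', Set.toFinset_card, ← SimpleGraph.edgeFinset_card]

lemma edgeCount_le (G : SimpleGraph (Fin N)) : edgeCount G ≤ N.choose 2 := by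
  rw [edgeCount_eq]
  have := SimpleGraph.card_edgeFinset_le_card_choose_two (G := G)
  rwa [Fintype.card_fin] at this

/-- The edge added by a triangle move. -/
lemma TriMove.edge {G H : SimpleGraph (Fin N)} (h : TriMove G H) :
    ∃ e ∈ TE N, e ∉ G.edgeFinset ∧ H.edgeFinset = insert e G.edgeFinset := by
  obtain ⟨i, j, hne, hnadj, _, rfl⟩ := h
  refine ⟨s(i, j), mem_TE.2 (by simpa using hne), by simpa using hnadj, ?_⟩
  ext e
  simp only [SimpleGraph.mem_edgeFinset, Finset.mem_insert, SimpleGraph.edgeSet_sup,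
    Set.mem_union, SimpleGraph.edgeSet_fromEdgeSet, Set.mem_diff, Set.mem_singleton_iff,
    Set.mem_setOf_eq]
  constructor
  · rintro (h | ⟨rfl, _⟩)
    · exact Or.inr h
    · exact Or.inl rfl
  · rintro (rfl | h)
    · exact Or.inr ⟨rfl, by simpa using hne⟩
    · exact Or.inl h

/-- Degrees in the triangle-move graph are at most `2 (N choose 2)`. -/
lemma deg_le (G : ConnGraph N) :
    ((GraphityGraph N).neighborSet G).ncard ≤ 2 * N.choose 2 := by
  classical
  set S : Finset (Finset (Sym2 (Fin N))) :=
    (TE N).image (fun e => insert e G.1.edgeFinset) ∪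
      (TE N).image (fun e => G.1.edgeFinset.erase e) with hS
  have hmaps : ∀ H ∈ (GraphityGraph N).neighborSet G, H.1.edgeFinset ∈ (S : Set (Finset _)) := by
    intro H hH
    obtain ⟨hne, hmv | hmv⟩ := (show G ≠ H ∧ (TriMove G.1 H.1 ∨ TriMove H.1 G.1) from hH)
    · obtain ⟨e, heT, _, hef⟩ := hmv.edge
      exact Finset.mem_coe.2 <| Finset.mem_union_left _ <|
        Finset.mem_image.2 ⟨e, heT, hef.symm⟩
    · obtain ⟨e, heT, heH, hef⟩ := hmv.edge
      refine Finset.mem_coe.2 <| Finset.mem_union_right _ <|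
        Finset.mem_image.2 ⟨e, heT, ?_⟩
      rw [hef, Finset.erase_insert heH]
  have hinj : Set.InjOn (fun H : ConnGraph N => H.1.edgeFinset)
      ((GraphityGraph N).neighborSet G) := by
    intro H1 _ H2 _ h
    exact Subtype.ext (SimpleGraph.edgeFinset_inj.1 h)
  have := Set.ncard_le_ncard_of_injOn _ hmaps hinj (S.finite_toSet)
  rw [Set.ncard_coe_finset] at this
  refine this.trans ?_
  refine (Finset.card_union_le _ _).trans ?_
  have h1 := Finset.card_image_le (s := TE N) (f := fun e => insert e G.1.edgeFinset)
  have h2 := Finset.card_image_le (s := TE N) (f := fun e => G.1.edgeFinset.erase e)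
  have hT := TE_card (N := N)
  omega

lemma conn_of_star {A : Finset (Sym2 (Fin N))} (v0 : Fin N)
    (hstar : ∀ v, v ≠ v0 → s(v0, v) ∈ A) :
    (SimpleGraph.fromEdgeSet (↑A : Set (Sym2 (Fin N)))).Connected := by
  rw [SimpleGraph.connected_iff]
  refine ⟨fun u v => ?_, ⟨v0⟩⟩
  have key : ∀ w, w ≠ v0 → (SimpleGraph.fromEdgeSet (↑A : Set (Sym2 (Fin N)))).Adj v0 w := by
    intro w hw
    exact (SimpleGraph.fromEdgeSet_adj _).2 ⟨hstar w hw, fun h => hw h.symm⟩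
  have reach : ∀ w, (SimpleGraph.fromEdgeSet (↑A : Set (Sym2 (Fin N)))).Reachable v0 w := by
    intro w
    by_cases hw : w = v0
    · subst hw; exact SimpleGraph.Reachable.refl _
    · exact (key w hw).reachable
  exact (reach u).symm.trans (reach v)

/-- Lower bound for the total degree of the triangle-move graph. -/
lemma D_lb (hN : 3 ≤ N) :
    2 ^ (N.choose 2 - N) ≤ ∑ H : ConnGraph N, ((GraphityGraph N).neighborSet H).ncard := by
  classical
  have hN0 : 0 < N := by omega
  set v0 : Fin N := ⟨0, by omega⟩
  set v1 : Fin N := ⟨1, by omega⟩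
  set v2 : Fin N := ⟨2, by omega⟩
  have h01 : v0 ≠ v1 := by simp [v0, v1, Fin.ext_iff]
  have h02 : v0 ≠ v2 := by simp [v0, v2, Fin.ext_iff]
  have h12 : v1 ≠ v2 := by simp [v1, v2, Fin.ext_iff]
  set star : Finset (Sym2 (Fin N)) := (Finset.univ.erase v0).image (fun v => s(v0, v)) with hstar
  set e12 : Sym2 (Fin N) := s(v1, v2) with he12
  set A : Finset (Sym2 (Fin N)) := insert e12 star with hA
  set T' : Finset (Sym2 (Fin N)) := TE N \ A with hT'
  have he12star : e12 ∉ star := by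
    simp only [hstar, Finset.mem_image, Finset.mem_erase]
    rintro ⟨v, ⟨hv, _⟩, hEq⟩
    rw [he12, Sym2.eq_iff] at hEq
    rcases hEq with ⟨h, _⟩ | ⟨h, _⟩
    · exact h01 h
    · exact h02 h
  have star_mem : ∀ v, v ≠ v0 → s(v0, v) ∈ star := by
    intro v hv
    exact Finset.mem_image.2 ⟨v, Finset.mem_erase.2 ⟨hv, Finset.mem_univ v⟩, rfl⟩
  have conn : ∀ s : Finset (Sym2 (Fin N)),
      (SimpleGraph.fromEdgeSet (↑(s ∪ star) : Set (Sym2 (Fin N)))).Connected := by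
    intro s
    apply conn_of_star v0
    intro v hv
    exact Finset.mem_union_right _ (star_mem v hv)
  set g : Finset (Sym2 (Fin N)) → ConnGraph N :=
    fun s => ⟨SimpleGraph.fromEdgeSet (↑(s ∪ star) : Set (Sym2 (Fin N))), conn s⟩ with hg
  have hnbr : ∀ s ∈ T'.powerset, 1 ≤ ((GraphityGraph N).neighborSet (g s)).ncard := by
    intro s hs
    rw [Finset.mem_powerset] at hs
    set Gs := (g s).1 with hGs
    have hadj0 : ∀ v, v ≠ v0 → Gs.Adj v0 v := by
      intro v hv
      exact (SimpleGraph.fromEdgeSet_adj _).2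
        ⟨Finset.mem_union_right _ (star_mem v hv), fun h => hv h.symm⟩
    have hnadj : ¬ Gs.Adj v1 v2 := by
      rw [SimpleGraph.fromEdgeSet_adj]
      rintro ⟨hmem, -⟩
      rw [Finset.mem_coe, Finset.mem_union] at hmem
      rcases hmem with h | h
      · have := hs h
        rw [hT', Finset.mem_sdiff] at this
        exact this.2 (Finset.mem_insert_self _ _)
      · exact he12star h
    have hmv : TriMove Gs (Gs ⊔ SimpleGraph.fromEdgeSet {e12}) :=
      ⟨v1, v2, h12, hnadj, ⟨v0, (hadj0 v1 (Ne.symm h01)).symm, (hadj0 v2 (Ne.symm h02)).symm⟩, rfl⟩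
    have hconn' : (Gs ⊔ SimpleGraph.fromEdgeSet {e12}).Connected :=
      (g s).2.mono le_sup_left
    have hAdj : (Gs ⊔ SimpleGraph.fromEdgeSet {e12}).Adj v1 v2 :=
      (SimpleGraph.sup_adj _ _ _ _).2 (Or.inr ((SimpleGraph.fromEdgeSet_adj _).2 ⟨rfl, h12⟩))
    have hneq : g s ≠ (⟨_, hconn'⟩ : ConnGraph N) := by
      intro h
      have heq : Gs = Gs ⊔ SimpleGraph.fromEdgeSet {e12} := congrArg Subtype.val h
      exact hnadj (by rw [heq]; exact hAdj)
    have hmem : (⟨_, hconn'⟩ : ConnGraph N) ∈ (GraphityGraph N).neighborSet (g s) :=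
      (⟨hneq, Or.inl hmv⟩ : _ ≠ _ ∧ (TriMove _ _ ∨ TriMove _ _))
    have := (Set.ncard_pos (Set.toFinite _)).2 ⟨_, hmem⟩
    omega
  have hstarTE : star ⊆ TE N := by
    intro e he
    obtain ⟨v, hv, rfl⟩ := Finset.mem_image.1 he
    rw [Finset.mem_erase] at hv
    exact mem_TE.2 (by simpa using (Ne.symm hv.1))
  have hATE : A ⊆ TE N := by
    rw [hA]
    intro e he
    rcases Finset.mem_insert.1 he with rfl | he
    · exact mem_TE.2 (by simpa [he12] using h12)
    · exact hstarTE he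
  have hsub_TE : ∀ s, s ⊆ T' → s ∪ star ⊆ TE N := fun s hs =>
    Finset.union_subset (hs.trans (Finset.sdiff_subset)) hstarTE
  have hdisj : ∀ s, s ⊆ T' → Disjoint s star := fun s hs =>
    (Finset.sdiff_disjoint.mono hs (Finset.subset_insert _ _))
  have hinj : Set.InjOn g ↑T'.powerset := by
    intro s1 hs1 s2 hs2 h
    rw [Finset.mem_coe, Finset.mem_powerset] at hs1 hs2
    have h' : (SimpleGraph.fromEdgeSet (↑(s1 ∪ star) : Set (Sym2 (Fin N))))
        = SimpleGraph.fromEdgeSet (↑(s2 ∪ star) : Set (Sym2 (Fin N))) := congrArg Subtype.val h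
    have hnd : ∀ s, s ⊆ T' →
        ((↑(s ∪ star) : Set (Sym2 (Fin N))) \ Sym2.diagSet) = ↑(s ∪ star) := by
      intro s hs
      ext e
      simp only [Set.mem_diff, Sym2.mem_diagSet, Finset.mem_coe, and_iff_left_iff_imp]
      intro he
      exact mem_TE.1 (hsub_TE s hs he)
    have hef : s1 ∪ star = s2 ∪ star := by
      have hs' := congrArg SimpleGraph.edgeSet h'
      rw [SimpleGraph.edgeSet_fromEdgeSet, SimpleGraph.edgeSet_fromEdgeSet,
        hnd s1 hs1, hnd s2 hs2] at hs'
      exact_mod_cast hs'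
    have := congrArg (fun t => t \ star) hef
    simpa [Finset.union_sdiff_cancel_right (hdisj s1 hs1),
      Finset.union_sdiff_cancel_right (hdisj s2 hs2)] using this
  have hcardA : A.card ≤ N := by
    refine (Finset.card_insert_le _ _).trans ?_
    have : star.card ≤ (Finset.univ.erase v0).card := Finset.card_image_le
    have h2 : (Finset.univ.erase v0).card = N - 1 := by
      rw [Finset.card_erase_of_mem (Finset.mem_univ _), Finset.card_univ, Fintype.card_fin]
    omega
  have hT'card : N.choose 2 - N ≤ T'.card := by
    rw [hT', Finset.card_sdiff_of_subset hATE, TE_card]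
    omega
  calc 2 ^ (N.choose 2 - N) ≤ 2 ^ T'.card := Nat.pow_le_pow_right (by norm_num) hT'card
    _ = T'.powerset.card := (Finset.card_powerset _).symm
    _ = (T'.powerset.image g).card := (Finset.card_image_of_injOn hinj).symm
    _ = ∑ _H ∈ T'.powerset.image g, 1 := by rw [Finset.sum_const, smul_eq_mul, mul_one]
    _ ≤ ∑ H ∈ T'.powerset.image g, ((GraphityGraph N).neighborSet H).ncard := by
        refine Finset.sum_le_sum ?_
        intro H hH
        obtain ⟨s, hs, rfl⟩ := Finset.mem_image.1 hH
        exact hnbr s hs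
    _ ≤ ∑ H : ConnGraph N, ((GraphityGraph N).neighborSet H).ncard :=
        Finset.sum_le_sum_of_subset (Finset.subset_univ _)

end Graphs

/-! ### Main theorem -/

set_option maxHeartbeats 1000000 in
theorem expected_edge_count_piN_aux (ε : ℝ) (hε : 0 < ε) (hε1 : ε ≤ 1) :
    ∃ N₀ : ℕ, ∀ N : ℕ, N₀ ≤ N →
      |(∑ G : ConnGraph N, piN N G * (edgeCount G.1 : ℝ)) -
          (1 / 2) * (N.choose 2 : ℝ)| ≤ ε * (N.choose 2 : ℝ) := by
  classical
  set c : ℝ := 3 * ε ^ 2 / 16 with hc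
  have hcpos : 0 < c := by positivity
  have h1 : ∀ᶠ N : ℕ in Filter.atTop, 3 ≤ N := Filter.eventually_atTop.2 ⟨3, fun N h => h⟩
  have h2 : ∀ᶠ N : ℕ in Filter.atTop, 4 / c + 1 ≤ (N : ℝ) :=
    tendsto_natCast_atTop_atTop.eventually_ge_atTop _
  have h3' : Filter.Tendsto (fun N : ℕ => ((N : ℝ)) ^ 2 * Real.exp (-(N : ℝ)))
      Filter.atTop (nhds 0) :=
    (Real.tendsto_pow_mul_exp_neg_atTop_nhds_zero 2).comp tendsto_natCast_atTop_atTop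
  have h3 : ∀ᶠ N : ℕ in Filter.atTop, ((N : ℝ)) ^ 2 * Real.exp (-(N : ℝ)) ≤ ε / 8 :=
    h3'.eventually (eventually_le_nhds (by positivity))
  obtain ⟨N₀, hN₀⟩ := Filter.eventually_atTop.1 ((h1.and h2).and h3)
  refine ⟨N₀, fun N hN => ?_⟩
  obtain ⟨⟨hN3, hN4c⟩, hNexp⟩ := hN₀ N hN
  -- basic facts about M = N choose 2
  set Mn : ℕ := N.choose 2 with hMn
  set M : ℝ := (Mn : ℝ) with hM
  have hMN : N ≤ Mn := by
    rw [hMn, Nat.choose_two_right]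
    rw [Nat.le_div_iff_mul_le (by norm_num)]
    calc N * 2 ≤ N * (N - 1) := Nat.mul_le_mul_left N (by omega)
      _ = N * (N - 1) := rfl
  have h2Mn : 2 * Mn = N * (N - 1) := by
    rw [hMn, Nat.choose_two_right]
    have hev : 2 ∣ N * (N - 1) := by
      have : N * (N - 1) = (N - 1) * ((N - 1) + 1) := by
        have : (N - 1) + 1 = N := by omega
        rw [this]; ring
      rw [this]
      exact (Nat.even_mul_succ_self (N - 1)).two_dvd
    omega
  have hMnpos : 0 < Mn := by omega
  have hMpos : 0 < M := by rw [hM]; exact_mod_cast hMnpos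
  have h2Mr : 2 * M = (N : ℝ) * ((N : ℝ) - 1) := by
    rw [hM]
    have := congrArg (fun k : ℕ => (k : ℝ)) h2Mn
    push_cast [Nat.cast_sub (by omega : 1 ≤ N)] at this
    linarith
  have hMleN2 : M ≤ (N : ℝ) ^ 2 := by nlinarith [h2Mr, Nat.cast_nonneg (α := ℝ) N]
  -- setup degrees
  set deg : ConnGraph N → ℝ := fun H => (((GraphityGraph N).neighborSet H).ncard : ℝ) with hdeg
  obtain ⟨D, hD⟩ : ∃ D : ℝ, D = ∑ H : ConnGraph N, deg H := ⟨_, rfl⟩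
  have hdegnn : ∀ H, 0 ≤ deg H := fun H => Nat.cast_nonneg _
  have hdegle : ∀ H, deg H ≤ 2 * M := by
    intro H
    have := deg_le H
    rw [hdeg, hM]
    simp only
    exact_mod_cast this
  have hDlb : (2 : ℝ) ^ (Mn - N) ≤ D := by
    have h := D_lb (N := N) hN3
    have h2 : ((2 ^ (Mn - N) : ℕ) : ℝ) ≤ ((∑ H : ConnGraph N,
        ((GraphityGraph N).neighborSet H).ncard : ℕ) : ℝ) := by exact_mod_cast h
    rw [hD, hdeg]
    push_cast at h2 ⊢
    exact h2
  have hDpos : 0 < D := lt_of_lt_of_le (by positivity) hDlb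
  set m : ConnGraph N → ℝ := fun G => (edgeCount G.1 : ℝ) with hm
  have hm0 : ∀ G, 0 ≤ m G := fun G => Nat.cast_nonneg _
  have hmle : ∀ G, m G ≤ M := by
    intro G
    show ((edgeCount G.1 : ℕ) : ℝ) ≤ ((Mn : ℕ) : ℝ)
    exact_mod_cast edgeCount_le G.1
  -- rewrite the expectation
  have hpiN : ∀ G, piN N G = deg G / D := fun G => by rw [hD]; rfl
  have hE : (∑ G : ConnGraph N, piN N G * m G) - (1 / 2) * M
      = (∑ G : ConnGraph N, deg G * (m G - M / 2)) / D := by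
    have hnum : ∑ G : ConnGraph N, deg G * (m G - M / 2)
        = (∑ G : ConnGraph N, deg G * m G) - (M / 2) * D := by
      rw [hD, Finset.mul_sum, ← Finset.sum_sub_distrib]
      exact Finset.sum_congr rfl fun G _ => by ring
    have hsum : (∑ G : ConnGraph N, piN N G * m G) = (∑ G : ConnGraph N, deg G * m G) / D := by
      rw [Finset.sum_div]
      exact Finset.sum_congr rfl fun G _ => by rw [hpiN, div_mul_eq_mul_div]
    rw [hsum, hnum, sub_div, mul_div_assoc, div_self hDpos.ne', mul_one]
    ring
  -- bad set of connected graphs, and bad subsets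
  set P : ConnGraph N → Prop := fun G => ε * M < |2 * m G - M| with hP
  set Bc : Finset (ConnGraph N) := Finset.univ.filter P with hBc
  have hBcs : ((Bc.card : ℕ) : ℝ) ≤ (((TE N).powerset.filter
      (fun s => ε * M ≤ |2 * (s.card : ℝ) - ((TE N).card : ℝ)|)).card : ℝ) := by
    have hn : Bc.card ≤ ((TE N).powerset.filter
        (fun s => ε * M ≤ |2 * (s.card : ℝ) - ((TE N).card : ℝ)|)).card := by
      refine Finset.card_le_card_of_injOn (fun G => G.1.edgeFinset) ?_ ?_
      · intro G hG
        rw [hBc, Finset.mem_coe, Finset.mem_filter] at hG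
        rw [Finset.mem_coe, Finset.mem_filter]
        refine ⟨Finset.mem_powerset.2 (edgeFinset_subset_TE _), ?_⟩
        have hcard : ((G.1.edgeFinset.card : ℝ)) = m G := by
          rw [hm]; simp only; rw [edgeCount_eq]
        have hTEc : (((TE N).card : ℕ) : ℝ) = M := by rw [TE_card, ← hMn, ← hM]
        rw [hcard, hTEc]
        exact le_of_lt hG.2
      · intro G1 _ G2 _ h
        exact Subtype.ext (SimpleGraph.edgeFinset_inj.1 h)
    exact_mod_cast hn
  have hBsR : ((Bc.card : ℕ) : ℝ) ≤ 2 * 2 ^ Mn * Real.exp (-(c * M)) := by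
    have hfused := hBcs.trans
      (aux_tail_bound (TE N) (ε / 4) (ε * M) (by positivity) (by linarith) (by positivity))
    rw [TE_card, ← hMn] at hfused
    have harg : (2 : ℝ) * (2 ^ Mn * Real.exp ((ε / 4) ^ 2 * (Mn : ℝ))) *
        Real.exp (-(ε / 4 * (ε * M)))
        = 2 * 2 ^ Mn * Real.exp (-(c * M)) := by
      rw [mul_assoc, mul_assoc, ← Real.exp_add]
      rw [hc, hM]
      ring_nf
    rw [harg] at hfused
    exact hfused
  -- numerator bound
  have habs : |∑ G : ConnGraph N, deg G * (m G - M / 2)|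
      ≤ ∑ G : ConnGraph N, deg G * |m G - M / 2| := by
    refine (Finset.abs_sum_le_sum_abs _ _).trans ?_
    refine Finset.sum_le_sum fun G _ => ?_
    rw [abs_mul, abs_of_nonneg (hdegnn G)]
  have hsplit : ∑ G : ConnGraph N, deg G * |m G - M / 2|
      = (∑ G ∈ Finset.univ.filter P, deg G * |m G - M / 2|)
        + ∑ G ∈ Finset.univ.filter (fun G => ¬ P G), deg G * |m G - M / 2| :=
    (Finset.sum_filter_add_sum_filter_not _ _ _).symm
  have hgood : ∑ G ∈ Finset.univ.filter (fun G => ¬ P G), deg G * |m G - M / 2|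
      ≤ (ε * M / 2) * D := by
    calc ∑ G ∈ Finset.univ.filter (fun G => ¬ P G), deg G * |m G - M / 2|
        ≤ ∑ G ∈ Finset.univ.filter (fun G => ¬ P G), deg G * (ε * M / 2) := by
          refine Finset.sum_le_sum fun G hG => ?_
          rw [Finset.mem_filter] at hG
          have h2 : |2 * m G - M| ≤ ε * M := not_lt.1 hG.2
          have h3 : |m G - M / 2| ≤ ε * M / 2 := by
            have : m G - M / 2 = (2 * m G - M) / 2 := by ring
            rw [this, abs_div, abs_two]
            linarith
          exact mul_le_mul_of_nonneg_left h3 (hdegnn G)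
      _ ≤ ∑ G : ConnGraph N, deg G * (ε * M / 2) := by
          refine Finset.sum_le_sum_of_subset_of_nonneg (Finset.filter_subset _ _) ?_
          intro G _ _
          have := hdegnn G
          positivity
      _ = (ε * M / 2) * D := by rw [hD, ← Finset.sum_mul]; ring
  have hbad : ∑ G ∈ Finset.univ.filter P, deg G * |m G - M / 2|
      ≤ (Bc.card : ℝ) * (2 * M * M) := by
    calc ∑ G ∈ Finset.univ.filter P, deg G * |m G - M / 2|
        ≤ ∑ _G ∈ Finset.univ.filter P, (2 * M) * M := by
          refine Finset.sum_le_sum fun G _ => ?_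
          have habs2 : |m G - M / 2| ≤ M := by
            rw [abs_le]
            constructor <;> [linarith [hm0 G, hMpos.le]; linarith [hmle G, hMpos.le]]
          exact mul_le_mul (hdegle G) habs2 (abs_nonneg _) (by positivity)
      _ = (Bc.card : ℝ) * (2 * M * M) := by
          rw [Finset.sum_const, nsmul_eq_mul, hBc]
  -- the key numeric inequality for the bad part
  have hkey : (Bc.card : ℝ) * (2 * M * M) ≤ (ε * M / 2) * D := by
    have hcM : 2 * (N : ℝ) ≤ c * M := by
      have hstep : 4 / c ≤ (N : ℝ) - 1 := by linarith
      have h4 : 4 ≤ c * ((N : ℝ) - 1) := by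
        rw [div_le_iff₀ hcpos] at hstep
        linarith [hstep]
      have hNpos : (0 : ℝ) < (N : ℝ) := by positivity
      nlinarith [h2Mr]
    have hexp2N : Real.exp (-(c * M)) ≤ Real.exp (-(2 * (N : ℝ))) :=
      Real.exp_le_exp.2 (by linarith)
    have h2N : (2 : ℝ) ^ N ≤ Real.exp (N : ℝ) := by
      calc (2 : ℝ) ^ N ≤ (Real.exp 1) ^ N := by
            apply pow_le_pow_left₀ (by norm_num)
            linarith [Real.add_one_le_exp 1]
        _ = Real.exp (N : ℝ) := Real.exp_one_pow N
    have hpow : (2 : ℝ) ^ Mn = 2 ^ (Mn - N) * 2 ^ N := by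
      rw [← pow_add]
      congr 1
      omega
    have hD2 : (2 : ℝ) ^ Mn ≤ D * 2 ^ N := by
      rw [hpow]
      exact mul_le_mul_of_nonneg_right hDlb (by positivity)
    -- final chain
    have hchain : (Bc.card : ℝ) * (2 * M * M) ≤ (D * 2 ^ N) * Real.exp (-(c * M)) * (4 * M * M) := by
      calc (Bc.card : ℝ) * (2 * M * M)
          ≤ (2 * 2 ^ Mn * Real.exp (-(c * M))) * (2 * M * M) := by
            apply mul_le_mul_of_nonneg_right hBsR (by positivity)
        _ ≤ (2 * (D * 2 ^ N) * Real.exp (-(c * M))) * (2 * M * M) := by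
            have := Real.exp_pos (-(c * M))
            have hMM : (0 : ℝ) ≤ 2 * M * M := by positivity
            apply mul_le_mul_of_nonneg_right _ hMM
            apply mul_le_mul_of_nonneg_right _ this.le
            nlinarith [hD2]
        _ = (D * 2 ^ N) * Real.exp (-(c * M)) * (4 * M * M) := by ring
    refine hchain.trans ?_
    have hfinal : (2 : ℝ) ^ N * Real.exp (-(c * M)) * (4 * M * M) ≤ ε * M / 2 := by
      have hstep1 : (2 : ℝ) ^ N * Real.exp (-(c * M)) ≤ Real.exp (-(N : ℝ)) := by
        calc (2 : ℝ) ^ N * Real.exp (-(c * M))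
            ≤ Real.exp (N : ℝ) * Real.exp (-(2 * (N : ℝ))) := by
              apply mul_le_mul h2N hexp2N (Real.exp_pos _).le (Real.exp_pos _).le
          _ = Real.exp (-(N : ℝ)) := by rw [← Real.exp_add]; ring_nf
      calc (2 : ℝ) ^ N * Real.exp (-(c * M)) * (4 * M * M)
          ≤ Real.exp (-(N : ℝ)) * (4 * M * M) := by
            apply mul_le_mul_of_nonneg_right hstep1 (by positivity)
        _ ≤ Real.exp (-(N : ℝ)) * (4 * (N : ℝ) ^ 2 * M) := by
            apply mul_le_mul_of_nonneg_left _ (Real.exp_pos _).le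
            nlinarith [hMpos, hMleN2]
        _ = ((N : ℝ) ^ 2 * Real.exp (-(N : ℝ))) * (4 * M) := by ring
        _ ≤ (ε / 8) * (4 * M) := by
            apply mul_le_mul_of_nonneg_right hNexp (by positivity)
        _ = ε * M / 2 := by ring
    calc (D * 2 ^ N) * Real.exp (-(c * M)) * (4 * M * M)
        = D * ((2 : ℝ) ^ N * Real.exp (-(c * M)) * (4 * M * M)) := by ring
      _ ≤ D * (ε * M / 2) := mul_le_mul_of_nonneg_left hfinal hDpos.le
      _ = (ε * M / 2) * D := by ring
  -- conclude
  have hgoal_eq : (∑ G : ConnGraph N, piN N G * (edgeCount G.1 : ℝ))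
      = ∑ G : ConnGraph N, piN N G * m G := rfl
  rw [hgoal_eq, hE, abs_div, abs_of_pos hDpos, div_le_iff₀ hDpos]
  calc |∑ G : ConnGraph N, deg G * (m G - M / 2)|
      ≤ ∑ G : ConnGraph N, deg G * |m G - M / 2| := habs
    _ = (∑ G ∈ Finset.univ.filter P, deg G * |m G - M / 2|)
        + ∑ G ∈ Finset.univ.filter (fun G => ¬ P G), deg G * |m G - M / 2| := hsplit
    _ ≤ (Bc.card : ℝ) * (2 * M * M) + (ε * M / 2) * D := add_le_add hbad hgood
    _ ≤ (ε * M / 2) * D + (ε * M / 2) * D := by linarith [hkey]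
    _ = ε * M * D := by ring


/-- For every `ε > 0` and all large `N`, the expected number of edges under the
degree-proportional distribution `π_N` on the triangle-move graph `𝒢_N` is within
`ε·(N choose 2)` of `(1/2)(N choose 2)`. -/
theorem expected_edge_count_piN (ε : ℝ) (hε : 0 < ε) :
    ∃ N₀ : ℕ, ∀ N : ℕ, N₀ ≤ N →
      |(∑ G : ConnGraph N, piN N G * (edgeCount G.1 : ℝ)) -
          (1 / 2) * (N.choose 2 : ℝ)| ≤ ε * (N.choose 2 : ℝ) := by
  obtain ⟨N₀, hN₀⟩ := expected_edge_count_piN_aux (min ε 1) (lt_min hε one_pos) (min_le_right _ _)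
  refine ⟨N₀, fun N hN => ?_⟩
  refine (hN₀ N hN).trans ?_
  apply mul_le_mul_of_nonneg_right (min_le_left _ _) (Nat.cast_nonneg _)
end

section
/- Fix n ≥ 2 sites and m = n(n−1)/2 edge slots, and work in the complex matrix algebra of size 2^(m+n), viewing the space as an (m+n)-fold tensor (Kronecker) product of ℂ² factors, the first m factors indexed by the unordered pairs e = (i,j) of distinct sites and the last n factors by the sites. For a 2×2 complex matrix A and a factor index a, let A_a denote the Kronecker product with A in position a and the 2×2 identity elsewhere. Define the Hamiltonian with exchange coupling k = 0 and chemical potential μ = 0 by H = −U·Σ_e (S^z)_e − t·Σ_{(i,j)} P_{(i,j)} · ((S⁺)_i (S⁻)_j + (S⁻)_i (S⁺)_j), where the last sum is over unordered pairs of distinct sites and P_{(i,j)} = ((1/2)·I − S^z)_{(i,j)} acts on the edge factor (i,j). Let X be the product of (σ^x)_i over all n site factors (and identity on all edge factors). Then X is an involution (X·X = 1) and conjugation by X leaves H invariant: X·H·X = H. (This is the self-duality of the k = 0 model at μ = 0 under exchanging creation and annihilation operators b_i ↔ b_i†.) -/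
/-- Edge slots: the `n(n-1)/2` unordered pairs of distinct sites. -/
abbrev EdgeIdx (n : ℕ) := {e : Sym2 (Fin n) // ¬ e.IsDiag}

/-- Tensor factor index: the `m = n(n-1)/2` edge factors together with the `n` site
factors. -/
abbrev FactorIdx (n : ℕ) := EdgeIdx n ⊕ Fin n

/-- Operators on the `(m+n)`-fold tensor (Kronecker) product of `ℂ²` factors, realized
as `2^(m+n) × 2^(m+n)` complex matrices indexed by spin configurations. -/
abbrev Op (n : ℕ) := Matrix (FactorIdx n → Fin 2) (FactorIdx n → Fin 2) ℂ

/-- `place n A a` is the Kronecker product with `A` in position `a` and the `2×2`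
identity in every other tensor factor. -/
noncomputable def place (n : ℕ) (A : Matrix (Fin 2) (Fin 2) ℂ) (a : FactorIdx n) : Op n :=
  Matrix.of fun x y =>
    A (x a) (y a) * ∏ b ∈ Finset.univ.erase a, (if x b = y b then (1 : ℂ) else 0)

/-- `S^z = (1/2)·σ^z`. -/
noncomputable def Sz : Matrix (Fin 2) (Fin 2) ℂ := !![1/2, 0; 0, -1/2]

/-- `S⁺`. -/
noncomputable def Sp : Matrix (Fin 2) (Fin 2) ℂ := !![0, 1; 0, 0]

/-- `S⁻`. -/
noncomputable def Sm : Matrix (Fin 2) (Fin 2) ℂ := !![0, 0; 1, 0]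

/-- The one-factor particle-number / projector operator `(1/2)·I − S^z`. -/
noncomputable def numOp : Matrix (Fin 2) (Fin 2) ℂ := (1 / 2 : ℂ) • 1 - Sz

/-- The edge factor associated with an (unordered) pair of distinct sites. -/
def edgeOf {n : ℕ} (i j : Fin n) (h : i ≠ j) : EdgeIdx n := ⟨s(i, j), by simpa using h⟩

/-- The hopping term `Σ_{(i,j)} P_{(i,j)} ((S⁺)_i (S⁻)_j + (S⁻)_i (S⁺)_j)`, the sum
running over unordered pairs of distinct sites (here realized as a sum over ordered
pairs of the term `P_{(i,j)} (S⁺)_i (S⁻)_j`). -/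
noncomputable def hopTerm (n : ℕ) : Op n :=
  ∑ i : Fin n, ∑ j : Fin n,
    if h : i ≠ j then
      place n numOp (Sum.inl (edgeOf i j h)) *
        (place n Sp (Sum.inr i) * place n Sm (Sum.inr j))
    else 0

/-- The total particle number operator `N̂ = Σ_i ((1/2)·I − S^z)_i`. -/
noncomputable def Nhat (n : ℕ) : Op n := ∑ i : Fin n, place n numOp (Sum.inr i)

/-- The Pauli matrix `σ^x`. -/
noncomputable def sigmaX : Matrix (Fin 2) (Fin 2) ℂ := !![0, 1; 1, 0]

/-- The product `X = ∏_i (σ^x)_i` of `σ^x` over all `n` site factors (and the identity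
on all edge factors). -/
noncomputable def Xop (n : ℕ) : Op n :=
  Matrix.of fun x y =>
    (∏ i : Fin n, sigmaX (x (Sum.inr i)) (y (Sum.inr i))) *
      ∏ e : EdgeIdx n, (if x (Sum.inl e) = y (Sum.inl e) then (1 : ℂ) else 0)


/-! ### Auxiliary tensor-product machinery -/

noncomputable def ten (n : ℕ) (F : FactorIdx n → Matrix (Fin 2) (Fin 2) ℂ) : Op n :=
  Matrix.of fun x y => ∏ a, F a (x a) (y a)

lemma ten_mul (n : ℕ) (F G : FactorIdx n → Matrix (Fin 2) (Fin 2) ℂ) :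
    ten n F * ten n G = ten n (fun a => F a * G a) := by
  ext x y
  simp only [ten, Matrix.of_apply, Matrix.mul_apply, ← Finset.prod_mul_distrib]
  rw [Finset.prod_univ_sum, Fintype.piFinset_univ]

lemma ten_one (n : ℕ) : ten n (fun _ => 1) = 1 := by
  ext x y
  simp only [ten, Matrix.of_apply, Matrix.one_apply]
  rw [Finset.prod_boole]
  simp [funext_iff]

lemma ten_congr (n : ℕ) {F G : FactorIdx n → Matrix (Fin 2) (Fin 2) ℂ}
    (h : ∀ a, F a = G a) : ten n F = ten n G := by
  simp only [ten]; congr 1; funext x y; exact Finset.prod_congr rfl fun a _ => by rw [h a]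

lemma place_eq_ten (n : ℕ) (A : Matrix (Fin 2) (Fin 2) ℂ) (a : FactorIdx n) :
    place n A a = ten n (Function.update (fun _ => (1 : Matrix (Fin 2) (Fin 2) ℂ)) a A) := by
  ext x y
  simp only [place, ten, Matrix.of_apply]
  rw [← Finset.mul_prod_erase Finset.univ _ (Finset.mem_univ a), Function.update_self]
  congr 1
  refine Finset.prod_congr rfl fun b hb => ?_
  rw [Function.update_of_ne (Finset.ne_of_mem_erase hb), Matrix.one_apply]

lemma Xop_eq_ten (n : ℕ) :
    Xop n = ten n (Sum.elim (fun _ => (1 : Matrix (Fin 2) (Fin 2) ℂ)) (fun _ => sigmaX)) := by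
  ext x y
  simp only [Xop, ten, Matrix.of_apply]
  rw [Fintype.prod_sum_type]
  simp [Matrix.one_apply, mul_comm]

lemma sigmaX_mul_sigmaX : sigmaX * sigmaX = 1 := by
  simp [sigmaX, Matrix.mul_fin_two, Matrix.one_fin_two]

lemma sigmaX_mul_Sp : sigmaX * Sp = Sm * sigmaX := by
  ext i j
  fin_cases i <;> fin_cases j <;>
    simp [sigmaX, Sp, Sm, Matrix.mul_apply, Fin.sum_univ_two]

lemma sigmaX_mul_Sm : sigmaX * Sm = Sp * sigmaX := by
  ext i j
  fin_cases i <;> fin_cases j <;>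
    simp [sigmaX, Sp, Sm, Matrix.mul_apply, Fin.sum_univ_two]

lemma Xop_mul_Xop (n : ℕ) : Xop n * Xop n = 1 := by
  rw [Xop_eq_ten, ten_mul, ← ten_one n]
  refine ten_congr n fun a => ?_
  rcases a with e | i
  · simp
  · simpa using sigmaX_mul_sigmaX

lemma Xop_comm_place_edge (n : ℕ) (A : Matrix (Fin 2) (Fin 2) ℂ) (e : EdgeIdx n) :
    Xop n * place n A (Sum.inl e) = place n A (Sum.inl e) * Xop n := by
  rw [Xop_eq_ten, place_eq_ten, ten_mul, ten_mul]
  refine ten_congr n fun a => ?_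
  rcases a with e' | i
  · simp
  · rw [Function.update_of_ne (by simp)]; simp

lemma Xop_term_swap (n : ℕ) (i j : Fin n) (h : i ≠ j) :
    Xop n * (place n numOp (Sum.inl (edgeOf i j h)) *
        (place n Sp (Sum.inr i) * place n Sm (Sum.inr j))) =
    place n numOp (Sum.inl (edgeOf j i h.symm)) *
        (place n Sp (Sum.inr j) * place n Sm (Sum.inr i)) * Xop n := by
  have hedge : edgeOf j i h.symm = edgeOf i j h := by
    apply Subtype.ext
    exact Sym2.eq_swap
  rw [hedge, Xop_eq_ten]
  simp only [place_eq_ten, ten_mul]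
  refine ten_congr n fun a => ?_
  rcases a with e' | k
  · simp only [Sum.elim_inl]
    rw [Function.update_of_ne (by simp : (Sum.inl e' : FactorIdx n) ≠ Sum.inr i),
        Function.update_of_ne (by simp : (Sum.inl e' : FactorIdx n) ≠ Sum.inr j)]
    simp [mul_comm]
  · simp only [Sum.elim_inr]
    rcases eq_or_ne k i with rfl | hki
    · simp [Function.update_apply, h, sigmaX_mul_Sp]
    · rcases eq_or_ne k j with rfl | hkj
      · simp [Function.update_apply, Ne.symm h, hki, sigmaX_mul_Sm]
      · simp [Function.update_apply, hki, hkj]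

lemma Xop_comm_hopTerm (n : ℕ) : Xop n * hopTerm n = hopTerm n * Xop n := by
  simp only [hopTerm, Finset.mul_sum, Finset.sum_mul]
  rw [Finset.sum_comm]
  refine Finset.sum_congr rfl fun j _ => Finset.sum_congr rfl fun i _ => ?_
  by_cases h : i ≠ j
  · rw [dif_pos h, dif_pos (Ne.symm h)]
    exact Xop_term_swap n i j h
  · rw [dif_neg h, dif_neg (fun h' => h (Ne.symm h'))]
    simp

/-- Self-duality of the `k = 0`, `μ = 0` model under `b_i ↔ b_i†`: the operator
`X = ∏_i (σ^x)_i` is an involution and conjugation by `X` leaves the Hamiltonian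
`H = −U·Σ_e (S^z)_e − t·Σ_{(i,j)} P_{(i,j)}((S⁺)_i(S⁻)_j + (S⁻)_i(S⁺)_j)` invariant. -/
theorem self_duality (n : ℕ) (hn : 2 ≤ n) (U t : ℂ) :
    Xop n * Xop n = 1 ∧
    Xop n * ((-U) • ∑ e : EdgeIdx n, place n Sz (Sum.inl e) + (-t) • hopTerm n) * Xop n =
      (-U) • ∑ e : EdgeIdx n, place n Sz (Sum.inl e) + (-t) • hopTerm n := by
  refine ⟨Xop_mul_Xop n, ?_⟩
  have hcomm : Xop n * ((-U) • ∑ e : EdgeIdx n, place n Sz (Sum.inl e) + (-t) • hopTerm n) =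
      ((-U) • ∑ e : EdgeIdx n, place n Sz (Sum.inl e) + (-t) • hopTerm n) * Xop n := by
    rw [mul_add, add_mul, Matrix.mul_smul, Matrix.smul_mul, Matrix.mul_smul, Matrix.smul_mul,
        Xop_comm_hopTerm, Finset.mul_sum, Finset.sum_mul]
    congr 2
    exact Finset.sum_congr rfl fun e _ => Xop_comm_place_edge n Sz e
  rw [hcomm, mul_assoc, Xop_mul_Xop, mul_one]
end
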